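/- arXiv:2406.08061 — 6 statements merged into one kernel-verified Lean document; each statement's English description precedes it below -/
import Mathlib

section
/- A continuous map f : X → Y is normal if and only if the following extension property holds: for every open O ⊆ Y, every nonempty subset F closed in the subspace f⁻¹(O), every point y ∈ O, and every bounded function φ̃ : F → ℝ that is f̃-continuous at y for the restriction f̃ : F → O of f (f̃(x) = f(x) for x ∈ F), there exists a bounded function φ : X → ℝ f-continuous at y for f : X → Y such that: (a) there is a G_δ-subset G of O with y ∈ G and φ̃ = φ on F ∩ f⁻¹(G) (in particular φ̃ = φ on F ∩ f⁻¹(y)); (b) ‖φ‖ ≤ ‖φ̃‖, where ‖·‖ is the sup-norm; (c) for every ε > 0 there is an open neighborhood O(ε) ⊆ O of y with sup_{x ∈ F ∩ f⁻¹(O(ε))} |φ̃(x) − φ(x)| < ε. (The forward implication is a Brouwer–Tietze–Urysohn extension theorem for mappings.) -/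
/- Definitions from fiberwise general topology (Liseev, "Functional approach
to the normality of mappings"). -/

variable {X Y : Type*} [TopologicalSpace X] [TopologicalSpace Y]

/-- Oscillation of a function `φ` at a point `x`, computed within the subspace `S`:
the infimum over open neighborhoods `G` of `x` of `sup_{z ∈ G ∩ S} |φ x - φ z|`. -/
noncomputable def oscWithin (S : Set X) (φ : X → ℝ) (x : X) : ℝ :=
  sInf {r : ℝ | ∃ G : Set X, IsOpen G ∧ x ∈ G ∧ r = sSup ((fun z => |φ x - φ z|) '' (G ∩ S))}

/-- Oscillation of `φ` on a set `A`, within the subspace `S`: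
`sup_{x ∈ A} oscWithin S φ x` (equal to `0` for `A = ∅`, since `sSup ∅ = 0` in `ℝ`). -/
noncomputable def oscOnWithin (S : Set X) (φ : X → ℝ) (A : Set X) : ℝ :=
  sSup (oscWithin S φ '' A)

/-- Oscillation of `φ : X → ℝ` at a point `x ∈ X`. -/
noncomputable def osc (φ : X → ℝ) (x : X) : ℝ := oscWithin Set.univ φ x

/-- Oscillation of `φ : X → ℝ` on a set `A ⊆ X`. -/
noncomputable def oscOn (φ : X → ℝ) (A : Set X) : ℝ := oscOnWithin Set.univ φ A

/-- `A` is an open subset of the subspace `S`. -/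
def OpenIn (S A : Set X) : Prop := ∃ G : Set X, IsOpen G ∧ A = G ∩ S

/-- `A` is a closed subset of the subspace `S`. -/
def ClosedIn (S A : Set X) : Prop := ∃ C : Set X, IsClosed C ∧ A = C ∩ S

/-- Closure of `A ⊆ S` in the subspace `S`. -/
def clIn (S A : Set X) : Set X := closure A ∩ S

/-- Interior of `A ⊆ S` in the subspace `S`. -/
def intIn (S A : Set X) : Set X :=
  ⋃₀ {V : Set X | (∃ G : Set X, IsOpen G ∧ V = G ∩ S) ∧ V ⊆ A}

/-- `A` is an `F_σ`-subset of the subspace `S`. -/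
def FSigmaIn (S A : Set X) : Prop := ∃ C : ℕ → Set X, (∀ l, ClosedIn S (C l)) ∧ A = ⋃ l, C l

/-- A (bounded) function `φ : X → ℝ` is `f`-continuous at a point `y ∈ Y`:
for every `ε > 0` there is an open neighborhood `O` of `y` with `osc_φ(f⁻¹ O) < ε`. -/
def FContinuousAt (f : X → Y) (φ : X → ℝ) (y : Y) : Prop :=
  ∀ ε > (0 : ℝ), ∃ O : Set Y, IsOpen O ∧ y ∈ O ∧ oscOn φ (f ⁻¹' O) < ε

/-- A family of functions `φ n : X → ℝ` is `f`-equicontinuous at a point `y ∈ Y`. -/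
def FEquicontinuousAt (f : X → Y) (φ : ℕ → X → ℝ) (y : Y) : Prop :=
  ∀ ε > (0 : ℝ), ∃ O : Set Y, IsOpen O ∧ y ∈ O ∧ ∀ n, oscOn (φ n) (f ⁻¹' O) < ε

/-- `A` and `B` are separated by neighborhoods in the subspace `S`:
`A ∩ S` and `B ∩ S` have disjoint open neighborhoods in `S`. -/
def SeparatedIn (S A B : Set X) : Prop :=
  ∃ U V : Set X, OpenIn S U ∧ OpenIn S V ∧ A ∩ S ⊆ U ∧ B ∩ S ⊆ V ∧ U ∩ V = ∅

/-- Prenormality of the restriction `f_O : f⁻¹ O → O` of `f` over `O`: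
any two disjoint closed (in `f⁻¹ O`) sets `A`, `B` are `f_O`-separated by neighborhoods. -/
def PrenormalOn (f : X → Y) (O : Set Y) : Prop :=
  ∀ A B : Set X, ClosedIn (f ⁻¹' O) A → ClosedIn (f ⁻¹' O) B → A ∩ B = ∅ →
    ∀ y ∈ O, ∃ W : Set Y, IsOpen W ∧ y ∈ W ∧ W ⊆ O ∧ SeparatedIn (f ⁻¹' W) A B

/-- A mapping `f : X → Y` is prenormal if any two disjoint closed subsets of `X`
are `f`-separated by neighborhoods. -/
def PrenormalMap (f : X → Y) : Prop :=
  ∀ A B : Set X, IsClosed A → IsClosed B → A ∩ B = ∅ →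
    ∀ y : Y, ∃ W : Set Y, IsOpen W ∧ y ∈ W ∧ SeparatedIn (f ⁻¹' W) A B

/-- A mapping `f : X → Y` is normal if for every open `O ⊆ Y` the restriction
`f_O : f⁻¹ O → O` is prenormal. -/
def NormalMap (f : X → Y) : Prop := ∀ O : Set Y, IsOpen O → PrenormalOn f O

/-- σ-prenormality of the restriction `f_O : f⁻¹ O → O` of `f` over `O`. -/
def SigmaPrenormalOn (f : X → Y) (O : Set Y) : Prop :=
  ∀ T : ℕ → Set X, (∀ l, ClosedIn (f ⁻¹' O) (T l)) →
    ∀ F : Set X, ClosedIn (f ⁻¹' O) F → (⋃ l, T l) ∩ F = ∅ →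
      ∀ y ∈ O, ∃ W : Set Y, IsOpen W ∧ y ∈ W ∧ W ⊆ O ∧
        ∃ V : ℕ → Set X, (∀ l, OpenIn (f ⁻¹' W) (V l)) ∧
          (∀ l, T l ∩ f ⁻¹' W ⊆ V l) ∧
          (⋃ l, clIn (f ⁻¹' W) (V l)) ∩ F = ∅

/-- A mapping `f : X → Y` is σ-normal if for every open `O ⊆ Y` the restriction
`f_O : f⁻¹ O → O` is σ-prenormal. -/
def SigmaNormalMap (f : X → Y) : Prop := ∀ O : Set Y, IsOpen O → SigmaPrenormalOn f O

/-- The submapping `f|_{X₀} : X₀ → Y` is of type `F_σ`: every `y ∈ Y` has an open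
neighborhood `W` with `X₀ ∩ f⁻¹ W` an `F_σ`-subset of the subspace `f⁻¹ W`. -/
def FSigmaSubmap (f : X → Y) (X₀ : Set X) : Prop :=
  ∀ y : Y, ∃ W : Set Y, IsOpen W ∧ y ∈ W ∧ FSigmaIn (f ⁻¹' W) (X₀ ∩ f ⁻¹' W)

/-- The submapping `(f_O)|_{X₀} : X₀ → O` of the restriction `f_O : f⁻¹ O → O`
is of type `F_σ`. -/
def FSigmaSubmapOn (f : X → Y) (O : Set Y) (X₀ : Set X) : Prop :=
  ∀ y ∈ O, ∃ W : Set Y, IsOpen W ∧ y ∈ W ∧ W ⊆ O ∧ FSigmaIn (f ⁻¹' W) (X₀ ∩ f ⁻¹' W)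

/-- `U 0, …, U (k-1)` is a regular `k`-partition of the subspace `S`. -/
structure IsRegularPartition (S : Set X) (k : ℕ) (U : ℕ → Set X) : Prop where
  subset : ∀ m < k, U m ⊆ S
  disj : ∀ m < k, ∀ m' < k, m ≠ m' → U m ∩ U m' = ∅
  cover : (⋃ m ∈ Finset.range k, U m) = S
  closed : ∀ p < k, ClosedIn S (⋃ m ∈ Finset.range (p + 1), U m)
  sep : ∀ p, p + 3 ≤ k →
    (⋃ m ∈ Finset.range (p + 1), U m) ∩ clIn S (⋃ m ∈ Finset.Ico (p + 2) k, U m) = ∅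

/-- A consistent family of binary partitions of the mapping `f : X → Y` at `y ∈ Y`. -/
structure ConsistentBinaryPartitions (f : X → Y) (y : Y) (O : ℕ → Set Y)
    (U : ℕ → ℕ → Set X) : Prop where
  isOpen : ∀ n, IsOpen (O n)
  mem : ∀ n, y ∈ O n
  zero : O 0 = Set.univ
  mono : ∀ n, O (n + 1) ⊆ O n
  part : ∀ n, IsRegularPartition (f ⁻¹' O n) (2 ^ n) (U n)
  consistent : ∀ n, ∀ k < 2 ^ n,
    U (n + 1) (2 * k) ∪ U (n + 1) (2 * k + 1) = U n k ∩ f ⁻¹' O (n + 1)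

/-- A mapping `f : X → Y` is perfectly normal (Definition 5.1). -/
def PerfectlyNormalMap (f : X → Y) : Prop :=
  ∀ O : Set X, IsOpen O → ∀ y : Y, ∃ Oy : Set Y, IsOpen Oy ∧ y ∈ Oy ∧
    ∃ φ : ℕ → X → ℝ, (∀ l x, φ l x ∈ Set.Icc (0 : ℝ) 1) ∧ FEquicontinuousAt f φ y ∧
      O ∩ f ⁻¹' Oy = (⋃ l, φ l ⁻¹' {1} ∩ f ⁻¹' Oy) ∧
      ∀ l, f ⁻¹' Oy \ O ⊆ φ l ⁻¹' {0} ∩ f ⁻¹' Oy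

/-- The submapping `f|_U : U → Y` is `f`-functionally open. -/
def FFunctionallyOpen (f : X → Y) (U : Set X) : Prop :=
  ∀ y : Y, ∃ Oy : Set Y, IsOpen Oy ∧ y ∈ Oy ∧
    ∃ φ : X → ℝ, (∀ x, φ x ∈ Set.Icc (0 : ℝ) 1) ∧ FContinuousAt f φ y ∧
      U ∩ f ⁻¹' Oy = φ ⁻¹' Set.Ioc (0 : ℝ) 1 ∩ f ⁻¹' Oy

/-- The submapping `f|_F : F → Y` is `f`-functionally closed. -/
def FFunctionallyClosed (f : X → Y) (F : Set X) : Prop :=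
  ∀ y : Y, ∃ Oy : Set Y, IsOpen Oy ∧ y ∈ Oy ∧
    ∃ φ : X → ℝ, (∀ x, φ x ∈ Set.Icc (0 : ℝ) 1) ∧ FContinuousAt f φ y ∧
      F ∩ f ⁻¹' Oy = φ ⁻¹' {0} ∩ f ⁻¹' Oy

/-- A σ-normal mapping `f : X → Y` is co-σ-perfectly normal if every open submapping
is of type `F_σ`. -/
def CoSigmaPerfectlyNormalMap (f : X → Y) : Prop :=
  SigmaNormalMap f ∧ ∀ U : Set X, IsOpen U → FSigmaSubmap f U


/-! ### Oscillation toolkit -/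

section OscToolkit

variable {f : X → Y} {S A G : Set X} {φ : X → ℝ} {x : X} {y : Y} {c C ε : ℝ}

lemma oscWithin_nonneg : 0 ≤ oscWithin S φ x := by
  apply Real.sInf_nonneg
  rintro r ⟨G, hG, hxG, rfl⟩
  exact Real.sSup_nonneg (by rintro v ⟨z, hz, rfl⟩; exact abs_nonneg _)

lemma oscWithin_bddBelow :
    BddBelow {r : ℝ | ∃ G : Set X, IsOpen G ∧ x ∈ G ∧
      r = sSup ((fun z => |φ x - φ z|) '' (G ∩ S))} := by
  refine ⟨0, ?_⟩
  rintro r ⟨G, hG, hxG, rfl⟩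
  exact Real.sSup_nonneg (by rintro v ⟨z, hz, rfl⟩; exact abs_nonneg _)

lemma oscWithin_le_of_witness (hc : 0 ≤ c) (hG : IsOpen G) (hxG : x ∈ G)
    (h : ∀ z ∈ G ∩ S, |φ x - φ z| ≤ c) : oscWithin S φ x ≤ c := by
  have hmem : sSup ((fun z => |φ x - φ z|) '' (G ∩ S)) ∈
      {r : ℝ | ∃ G : Set X, IsOpen G ∧ x ∈ G ∧
        r = sSup ((fun z => |φ x - φ z|) '' (G ∩ S))} := ⟨G, hG, hxG, rfl⟩
  refine le_trans (csInf_le oscWithin_bddBelow hmem) ?_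
  exact Real.sSup_le (by rintro v ⟨z, hz, rfl⟩; exact h z hz) hc

lemma oscWithin_lt_extract (hb : ∀ z ∈ S, |φ z| ≤ C) (h : oscWithin S φ x < ε) :
    ∃ G : Set X, IsOpen G ∧ x ∈ G ∧ ∀ z ∈ G ∩ S, |φ x - φ z| < ε := by
  have hne : {r : ℝ | ∃ G : Set X, IsOpen G ∧ x ∈ G ∧
      r = sSup ((fun z => |φ x - φ z|) '' (G ∩ S))}.Nonempty :=
    ⟨_, Set.univ, isOpen_univ, Set.mem_univ x, rfl⟩
  obtain ⟨r, ⟨G, hG, hxG, rfl⟩, hrε⟩ := exists_lt_of_csInf_lt hne h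
  refine ⟨G, hG, hxG, fun z hz => lt_of_le_of_lt ?_ hrε⟩
  refine le_csSup ⟨|φ x| + C, ?_⟩ (Set.mem_image_of_mem _ hz)
  rintro v ⟨w, hw, rfl⟩
  calc |φ x - φ w| ≤ |φ x| + |φ w| := abs_sub _ _
    _ ≤ |φ x| + C := by linarith [hb w hw.2]

lemma oscOnWithin_le (hc : 0 ≤ c) (h : ∀ x ∈ A, oscWithin S φ x ≤ c) :
    oscOnWithin S φ A ≤ c :=
  Real.sSup_le (by rintro v ⟨z, hz, rfl⟩; exact h z hz) hc

lemma oscWithin_le_oscOnWithin (hbS : ∀ z ∈ S, |φ z| ≤ C) (hbA : ∀ z ∈ A, |φ z| ≤ C)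
    (hx : x ∈ A) : oscWithin S φ x ≤ oscOnWithin S φ A := by
  refine le_csSup ⟨C + C, ?_⟩ (Set.mem_image_of_mem _ hx)
  rintro v ⟨z, hz, rfl⟩
  have hC : 0 ≤ C := le_trans (abs_nonneg _) (hbA x hx)
  refine oscWithin_le_of_witness (by linarith) isOpen_univ (Set.mem_univ z) ?_
  rintro w ⟨-, hw⟩
  calc |φ z - φ w| ≤ |φ z| + |φ w| := abs_sub _ _
    _ ≤ C + C := add_le_add (hbA z hz) (hbS w hw)

lemma extract_of_oscOnWithin_lt (hbS : ∀ z ∈ S, |φ z| ≤ C) (hbA : ∀ z ∈ A, |φ z| ≤ C)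
    (hx : x ∈ A) (h : oscOnWithin S φ A < ε) :
    ∃ G : Set X, IsOpen G ∧ x ∈ G ∧ ∀ z ∈ G ∩ S, |φ x - φ z| < ε :=
  oscWithin_lt_extract hbS (lt_of_le_of_lt (oscWithin_le_oscOnWithin hbS hbA hx) h)

lemma FContinuousAt.extract (hφ : FContinuousAt f φ y) (hb : ∀ z, |φ z| ≤ C) (hε : 0 < ε) :
    ∃ W : Set Y, IsOpen W ∧ y ∈ W ∧ ∀ x ∈ f ⁻¹' W,
      ∃ G : Set X, IsOpen G ∧ x ∈ G ∧ ∀ z ∈ G, |φ x - φ z| < ε := by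
  obtain ⟨W, h1, h2, h3⟩ := hφ ε hε
  refine ⟨W, h1, h2, fun x hx => ?_⟩
  obtain ⟨G, hG, hxG, hGz⟩ := extract_of_oscOnWithin_lt (C := C)
    (fun z _ => hb z) (fun z _ => hb z) hx h3
  exact ⟨G, hG, hxG, fun z hz => hGz z ⟨hz, Set.mem_univ z⟩⟩

lemma fContinuousAt_of
    (h : ∀ ε > (0 : ℝ), ∃ W : Set Y, IsOpen W ∧ y ∈ W ∧ ∀ x ∈ f ⁻¹' W,
      ∃ G : Set X, IsOpen G ∧ x ∈ G ∧ ∀ z ∈ G, |φ x - φ z| ≤ ε) :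
    FContinuousAt f φ y := by
  intro ε hε
  obtain ⟨W, h1, h2, h3⟩ := h (ε / 2) (by positivity)
  refine ⟨W, h1, h2, ?_⟩
  have hb2 : oscOn φ (f ⁻¹' W) ≤ ε / 2 := by
    refine oscOnWithin_le (by positivity) fun x hx => ?_
    obtain ⟨G, hG, hxG, hGz⟩ := h3 x hx
    exact oscWithin_le_of_witness (by positivity) hG hxG fun z hz => hGz z hz.1
  linarith

lemma fContinuousAt_const : FContinuousAt f (fun _ => c) y := by
  refine fContinuousAt_of fun ε hε => ⟨Set.univ, isOpen_univ, Set.mem_univ y, fun x _ => ?_⟩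
  exact ⟨Set.univ, isOpen_univ, Set.mem_univ x, fun z _ => by simp; linarith⟩

end OscToolkit

/-! ### Insertion lemma and Urysohn data -/

section Urysohn

variable {f : X → Y}

lemma insertion (hN : NormalMap f) (hf : Continuous f) {O : Set Y} (hO : IsOpen O) {y : Y}
    (hy : y ∈ O) {A C : Set X} (hA : ClosedIn (f ⁻¹' O) A) (hC : ClosedIn (f ⁻¹' O) C)
    (hAC : A ∩ C = ∅) :
    ∃ W : Set Y, IsOpen W ∧ y ∈ W ∧ W ⊆ O ∧ ∃ N : Set X, IsOpen N ∧ N ⊆ f ⁻¹' W ∧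
      A ∩ f ⁻¹' W ⊆ N ∧ closure N ∩ C ∩ f ⁻¹' W = ∅ := by
  obtain ⟨W, hWo, hyW, hWO, U, V, hU, hV, hAU, hCV, hUV⟩ := hN O hO A C hA hC hAC y hy
  obtain ⟨GU, hGU, rfl⟩ := hU
  obtain ⟨GV, hGV, rfl⟩ := hV
  refine ⟨W, hWo, hyW, hWO, GU ∩ f ⁻¹' W, hGU.inter (hWo.preimage hf),
    Set.inter_subset_right, hAU, ?_⟩
  ext x
  simp only [Set.mem_inter_iff, Set.mem_empty_iff_false, iff_false, not_and]
  rintro ⟨hxcl, hxC⟩ hxW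
  have hxV : x ∈ GV ∩ f ⁻¹' W := hCV ⟨hxC, hxW⟩
  obtain ⟨z, hz1, hz2⟩ := mem_closure_iff.1 hxcl (GV ∩ f ⁻¹' W)
    (hGV.inter (hWo.preimage hf)) hxV
  have : z ∈ (GU ∩ f ⁻¹' W) ∩ (GV ∩ f ⁻¹' W) := ⟨hz2, hz1⟩
  rw [hUV] at this
  exact this

variable (f) in
structure UryData (O : Set Y) (y : Y) (A B : Set X) : Type _ where
  W : ℕ → Set Y
  V : ℕ → ℕ → Set X
  isOpenW : ∀ n, IsOpen (W n)
  memW : ∀ n, y ∈ W n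
  WsubO : ∀ n, W n ⊆ O
  Wmono : ∀ n, W (n + 1) ⊆ W n
  openV : ∀ n k, k ≤ 2 ^ n → ∃ G : Set X, IsOpen G ∧ V n k = G ∩ f ⁻¹' (W n)
  AsubV : ∀ n, A ∩ f ⁻¹' (W n) ⊆ V n 0
  chain : ∀ n k, k < 2 ^ n → closure (V n k) ∩ f ⁻¹' (W n) ⊆ V n (k + 1)
  Bdisj : ∀ n, closure (V n (2 ^ n)) ∩ B ∩ f ⁻¹' (W n) = ∅

namespace UryData

variable {O : Set Y} {y : Y} {A B : Set X} (d : UryData f O y A B)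

lemma VsubW {n k : ℕ} (hk : k ≤ 2 ^ n) : d.V n k ⊆ f ⁻¹' (d.W n) := by
  obtain ⟨G, -, hG⟩ := d.openV n k hk
  rw [hG]; exact Set.inter_subset_right

lemma isOpenV (hf : Continuous f) {n k : ℕ} (hk : k ≤ 2 ^ n) : IsOpen (d.V n k) := by
  obtain ⟨G, hGo, hG⟩ := d.openV n k hk
  rw [hG]; exact hGo.inter ((d.isOpenW n).preimage hf)

lemma Vmono {n k k' : ℕ} (hkk' : k ≤ k') (hk' : k' ≤ 2 ^ n) : d.V n k ⊆ d.V n k' := by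
  induction k', hkk' using Nat.le_induction with
  | base => exact subset_rfl
  | succ k' hkk' ih =>
    refine (ih (by omega)).trans fun x hx => d.chain n k' (by omega)
      ⟨subset_closure hx, d.VsubW (n := n) (by omega) hx⟩

lemma Wantitone {m n : ℕ} (hmn : m ≤ n) : d.W n ⊆ d.W m := by
  induction n, hmn using Nat.le_induction with
  | base => exact subset_rfl
  | succ n hmn ih => exact (d.Wmono n).trans ih

end UryData

variable {O : Set Y} {y : Y} {A B : Set X}

lemma UryData.down (d : UryData f O y A B) (hcons : ∀ n k, k ≤ 2 ^ n →
      d.V (n + 1) (2 * k) = d.V n k ∩ f ⁻¹' (d.W (n + 1))) :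
    ∀ (dd n j k : ℕ), j ≤ 2 ^ (n + dd) → k ≤ 2 ^ n → j ≤ k * 2 ^ dd →
      d.V (n + dd) j ⊆ d.V n k := by
  intro dd
  induction dd with
  | zero =>
    intro n j k hj hk hjk
    exact d.Vmono (by simpa using hjk) hk
  | succ dd ih =>
    intro n j k hj hk hjk
    have e : n + (dd + 1) = (n + 1) + dd := by omega
    have h2k : 2 * k ≤ 2 ^ (n + 1) := by rw [pow_succ]; omega
    have hj' : j ≤ 2 ^ ((n + 1) + dd) := by rw [← e]; exact hj
    have hjk' : j ≤ (2 * k) * 2 ^ dd := by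
      have : (2 * k) * 2 ^ dd = k * 2 ^ (dd + 1) := by ring
      omega
    have h1 : d.V (n + (dd + 1)) j ⊆ d.V (n + 1) (2 * k) := by
      rw [e]; exact ih (n + 1) j (2 * k) hj' h2k hjk'
    refine h1.trans ?_
    rw [hcons n k hk]; exact Set.inter_subset_left

lemma UryData.up (d : UryData f O y A B) (hcons : ∀ n k, k ≤ 2 ^ n →
      d.V (n + 1) (2 * k) = d.V n k ∩ f ⁻¹' (d.W (n + 1))) :
    ∀ (dd n j : ℕ), j ≤ 2 ^ n →
      d.V n j ∩ f ⁻¹' (d.W (n + dd)) ⊆ d.V (n + dd) (j * 2 ^ dd) := by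
  intro dd
  induction dd with
  | zero =>
    intro n j hj
    simpa using Set.inter_subset_left
  | succ dd ih =>
    intro n j hj x hx
    have e : n + (dd + 1) = (n + 1) + dd := by omega
    have hx1 : x ∈ d.V (n + 1) (2 * j) := by
      rw [hcons n j hj]
      exact ⟨hx.1, d.Wantitone (by omega) hx.2⟩
    have hx2 : x ∈ d.V (n + 1) (2 * j) ∩ f ⁻¹' (d.W ((n + 1) + dd)) := by
      refine ⟨hx1, ?_⟩
      have := hx.2
      rw [e] at this
      exact this
    have h2j : 2 * j ≤ 2 ^ (n + 1) := by rw [pow_succ]; omega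
    have := ih (n + 1) (2 * j) h2j hx2
    have e2 : (2 * j) * 2 ^ dd = j * 2 ^ (dd + 1) := by ring
    rw [e2] at this
    rw [e]
    exact this

lemma UryData.mem_level (d : UryData f O y A B) (hcons : ∀ n k, k ≤ 2 ^ n →
      d.V (n + 1) (2 * k) = d.V n k ∩ f ⁻¹' (d.W (n + 1)))
    {n : ℕ} {x : X} (hx : x ∈ f ⁻¹' (d.W n)) {m j : ℕ} (hj : j ≤ 2 ^ m)
    (hxm : x ∈ d.V m j) :
    ∃ k, k ≤ 2 ^ n ∧ x ∈ d.V n k ∧ k * 2 ^ m ≤ j * 2 ^ n + 2 ^ m := by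
  rcases le_or_gt n m with hnm | hmn
  · -- n ≤ m : go down
    obtain ⟨dd, rfl⟩ : ∃ dd, m = n + dd := ⟨m - n, by omega⟩
    set s := 2 ^ dd with hs
    have hs0 : 0 < s := Nat.pow_pos (by omega)
    set k := (j + s - 1) / s with hk
    have hdm : s * ((j + s - 1) / s) + (j + s - 1) % s = j + s - 1 := Nat.div_add_mod _ _
    have hcomm : s * ((j + s - 1) / s) = k * s := by rw [hk, Nat.mul_comm]
    have hmod : (j + s - 1) % s < s := Nat.mod_lt _ hs0
    have hjk : j ≤ k * s := by omega
    have hks : k * s ≤ j + s - 1 := by omega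
    have hpow : (2 : ℕ) ^ (n + dd) = 2 ^ n * s := by rw [pow_add]
    have hk2 : k ≤ 2 ^ n := by
      have h1 : k * s ≤ 2 ^ n * s + s - 1 := by
        have : j ≤ 2 ^ n * s := by rw [← hpow]; exact hj
        omega
      by_contra hgt
      push_neg at hgt
      have : (2 ^ n + 1) * s ≤ k * s := Nat.mul_le_mul_right s hgt
      have : (2 ^ n + 1) * s = 2 ^ n * s + s := by ring
      omega
    refine ⟨k, hk2, d.down hcons dd n j k hj hk2 hjk hxm, ?_⟩
    rw [hpow]
    calc k * (2 ^ n * s) = (k * s) * 2 ^ n := by ring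
      _ ≤ (j + s) * 2 ^ n := Nat.mul_le_mul_right _ (by omega)
      _ = j * 2 ^ n + 2 ^ n * s := by ring
  · -- m < n : go up
    obtain ⟨dd, rfl⟩ : ∃ dd, n = m + dd := ⟨n - m, by omega⟩
    refine ⟨j * 2 ^ dd, ?_, d.up hcons dd m j hj ⟨hxm, hx⟩, ?_⟩
    · calc j * 2 ^ dd ≤ 2 ^ m * 2 ^ dd := Nat.mul_le_mul_right _ hj
        _ = 2 ^ (m + dd) := by rw [pow_add]
    · have : j * 2 ^ dd * 2 ^ m = j * 2 ^ (m + dd) := by rw [pow_add]; ring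
      omega

end Urysohn

section Phi

variable {f : X → Y} {O : Set Y} {y : Y} {A B : Set X}

namespace UryData

noncomputable def phi (d : UryData f O y A B) : X → ℝ := fun x =>
  sInf (insert (1 : ℝ) {r : ℝ | ∃ m j : ℕ, j ≤ 2 ^ m ∧ x ∈ d.V m j ∧ r = (j : ℝ) / 2 ^ m})

lemma phiSet_nonneg (d : UryData f O y A B) (x : X) :
    ∀ r ∈ insert (1 : ℝ) {r : ℝ | ∃ m j : ℕ, j ≤ 2 ^ m ∧ x ∈ d.V m j ∧ r = (j : ℝ) / 2 ^ m},
      0 ≤ r := by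
  rintro r (rfl | ⟨m, j, hj, hx, rfl⟩)
  · norm_num
  · positivity

lemma phi_nonneg (d : UryData f O y A B) {x : X} : 0 ≤ d.phi x :=
  Real.sInf_nonneg (d.phiSet_nonneg x)

lemma phi_le_one (d : UryData f O y A B) {x : X} : d.phi x ≤ 1 :=
  csInf_le ⟨0, d.phiSet_nonneg x⟩ (Set.mem_insert _ _)

lemma phi_le (d : UryData f O y A B) {x : X} {n k : ℕ} (hk : k ≤ 2 ^ n)
    (hx : x ∈ d.V n k) : d.phi x ≤ (k : ℝ) / 2 ^ n :=
  csInf_le ⟨0, d.phiSet_nonneg x⟩ (Set.mem_insert_iff.2 (Or.inr ⟨n, k, hk, hx, rfl⟩))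

lemma phi_ge (d : UryData f O y A B) (hcons : ∀ n k, k ≤ 2 ^ n →
      d.V (n + 1) (2 * k) = d.V n k ∩ f ⁻¹' (d.W (n + 1)))
    {n : ℕ} {x : X} (hx : x ∈ f ⁻¹' (d.W n)) {k₀ : ℕ} (hk₀ : k₀ ≤ 2 ^ n)
    (hlow : ∀ k, k ≤ 2 ^ n → x ∈ d.V n k → k₀ ≤ k) :
    ((k₀ : ℝ) - 1) / 2 ^ n ≤ d.phi x := by
  have h2n : (0 : ℝ) < 2 ^ n := by positivity
  apply le_csInf ⟨1, Set.mem_insert _ _⟩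
  rintro r (rfl | ⟨m, j, hj, hxm, rfl⟩)
  · rw [div_le_one h2n]
    have : (k₀ : ℝ) ≤ 2 ^ n := by exact_mod_cast hk₀
    linarith
  · have h2m : (0 : ℝ) < 2 ^ m := by positivity
    obtain ⟨k, hk2, hxk, hineq⟩ := d.mem_level hcons hx hj hxm
    have hk₀k : k₀ ≤ k := hlow k hk2 hxk
    rw [div_le_div_iff₀ h2n h2m]
    have h1 : (k : ℝ) * 2 ^ m ≤ (j : ℝ) * 2 ^ n + 2 ^ m := by exact_mod_cast hineq
    have h2 : (k₀ : ℝ) ≤ k := by exact_mod_cast hk₀k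
    nlinarith

lemma phi_eq_one (d : UryData f O y A B) (hcons : ∀ n k, k ≤ 2 ^ n →
      d.V (n + 1) (2 * k) = d.V n k ∩ f ⁻¹' (d.W (n + 1)))
    {n : ℕ} {x : X} (hx : x ∈ f ⁻¹' (d.W n)) (hnone : ∀ k, k ≤ 2 ^ n → x ∉ d.V n k) :
    d.phi x = 1 := by
  have hset : insert (1 : ℝ)
      {r : ℝ | ∃ m j : ℕ, j ≤ 2 ^ m ∧ x ∈ d.V m j ∧ r = (j : ℝ) / 2 ^ m} = {1} := by
    apply Set.Subset.antisymm
    · rintro r (rfl | ⟨m, j, hj, hxm, rfl⟩)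
      · exact rfl
      · exfalso
        obtain ⟨k, hk2, hxk, -⟩ := d.mem_level hcons hx hj hxm
        exact hnone k hk2 hxk
    · rintro r rfl
      exact Set.mem_insert _ _
  rw [phi, hset, csInf_singleton]

lemma osc_bound (d : UryData f O y A B) (hcons : ∀ n k, k ≤ 2 ^ n →
      d.V (n + 1) (2 * k) = d.V n k ∩ f ⁻¹' (d.W (n + 1)))
    (hf : Continuous f) {n : ℕ} {x : X} (hx : x ∈ f ⁻¹' (d.W n)) :
    ∃ G : Set X, IsOpen G ∧ x ∈ G ∧ ∀ z ∈ G, |d.phi x - d.phi z| ≤ 2 / 2 ^ n := by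
  classical
  have h2n : (0 : ℝ) < 2 ^ n := by positivity
  by_cases hex : ∃ k, k ≤ 2 ^ n ∧ x ∈ d.V n k
  · obtain ⟨k₀, hk₀le, hxk₀, hlow⟩ : ∃ k₀, k₀ ≤ 2 ^ n ∧ x ∈ d.V n k₀ ∧
        ∀ k, k ≤ 2 ^ n → x ∈ d.V n k → k₀ ≤ k :=
      ⟨Nat.find hex, (Nat.find_spec hex).1, (Nat.find_spec hex).2,
        fun k hk hxk => Nat.find_min' hex ⟨hk, hxk⟩⟩
    rcases Nat.lt_or_ge k₀ 2 with hk01 | hk02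
    · refine ⟨d.V n k₀, d.isOpenV hf hk₀le, hxk₀, fun z hz => ?_⟩
      have hz1 : d.phi z ≤ (k₀ : ℝ) / 2 ^ n := d.phi_le hk₀le hz
      have hx1 : d.phi x ≤ (k₀ : ℝ) / 2 ^ n := d.phi_le hk₀le hxk₀
      have hc : (k₀ : ℝ) ≤ 2 := by exact_mod_cast (by omega : k₀ ≤ 2)
      have h1 : (k₀ : ℝ) / 2 ^ n ≤ 2 / 2 ^ n := by gcongr
      have := d.phi_nonneg (x := z)
      have := d.phi_nonneg (x := x)
      rw [abs_le]; constructor <;> linarith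
    · obtain ⟨p, rfl⟩ : ∃ p, k₀ = p + 2 := ⟨k₀ - 2, by omega⟩
      have hp2 : p + 2 ≤ 2 ^ n := hk₀le
      have hxnotcl : x ∉ closure (d.V n p) := by
        intro hcl
        have h1 : x ∈ d.V n (p + 1) := d.chain n p (by omega) ⟨hcl, hx⟩
        have := hlow (p + 1) (by omega) h1
        omega
      refine ⟨d.V n (p + 2) \ closure (d.V n p),
        (d.isOpenV hf hk₀le).sdiff isClosed_closure, ⟨hxk₀, hxnotcl⟩, fun z hz => ?_⟩
      obtain ⟨hzV, hzncl⟩ := hz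
      have hzW : z ∈ f ⁻¹' (d.W n) := d.VsubW hk₀le hzV
      have hzlow : ∀ k, k ≤ 2 ^ n → z ∈ d.V n k → p + 1 ≤ k := by
        intro k hk hzk
        by_contra hlt
        push_neg at hlt
        exact hzncl (subset_closure (d.Vmono (by omega) (by omega) hzk))
      have hzub : d.phi z ≤ ((p : ℝ) + 2) / 2 ^ n := by
        have := d.phi_le hk₀le hzV; push_cast at this; linarith
      have hzlb : ((p : ℝ) + 1 - 1) / 2 ^ n ≤ d.phi z := by
        have := d.phi_ge hcons hzW (k₀ := p + 1) (by omega) hzlow; push_cast at this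
        linarith
      have hxub : d.phi x ≤ ((p : ℝ) + 2) / 2 ^ n := by
        have := d.phi_le hk₀le hxk₀; push_cast at this; linarith
      have hxlb : ((p : ℝ) + 2 - 1) / 2 ^ n ≤ d.phi x := by
        have := d.phi_ge hcons hx hk₀le hlow; push_cast at this; linarith
      have e1 : ((p : ℝ) + 2) / 2 ^ n - ((p : ℝ) + 1 - 1) / 2 ^ n = 2 / 2 ^ n := by ring
      have e2 : ((p : ℝ) + 2 - 1) / 2 ^ n - ((p : ℝ) + 2) / 2 ^ n = -(1 / 2 ^ n) := by ring
      have e3 : (1 : ℝ) / 2 ^ n ≤ 2 / 2 ^ n := by gcongr <;> norm_num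
      rw [abs_le]; constructor <;> linarith
  · push_neg at hex
    have h1le : 1 ≤ (2 : ℕ) ^ n := Nat.pow_pos (by norm_num)
    have hq : (2 : ℕ) ^ n - 1 + 1 = 2 ^ n := by omega
    have hxnotcl : x ∉ closure (d.V n (2 ^ n - 1)) := by
      intro hcl
      have h1 : x ∈ d.V n (2 ^ n - 1 + 1) := d.chain n (2 ^ n - 1) (by omega) ⟨hcl, hx⟩
      rw [hq] at h1
      exact hex _ le_rfl h1
    refine ⟨f ⁻¹' (d.W n) \ closure (d.V n (2 ^ n - 1)),
      ((d.isOpenW n).preimage hf).sdiff isClosed_closure, ⟨hx, hxnotcl⟩, fun z hz => ?_⟩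
    have hzlow : ∀ k, k ≤ 2 ^ n → z ∈ d.V n k → 2 ^ n ≤ k := by
      intro k hk hzk
      by_contra hlt
      push_neg at hlt
      exact hz.2 (subset_closure (d.Vmono (by omega) (by omega) hzk))
    have hzlb : ((2 : ℝ) ^ n - 1) / 2 ^ n ≤ d.phi z := by
      have h := d.phi_ge hcons hz.1 (k₀ := 2 ^ n) le_rfl hzlow
      have hcast : ((2 ^ n : ℕ) : ℝ) = 2 ^ n := by push_cast; ring
      rw [hcast] at h
      exact h
    have hzub : d.phi z ≤ 1 := d.phi_le_one
    have hxeq : d.phi x = 1 := d.phi_eq_one hcons hx hex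
    have e : ((2 : ℝ) ^ n - 1) / 2 ^ n = 1 - 1 / 2 ^ n := by field_simp
    rw [e] at hzlb
    rw [hxeq, abs_le]
    have h12 : 1 / 2 ^ n ≤ 2 / (2 : ℝ) ^ n := by gcongr <;> norm_num
    constructor <;> linarith

end UryData

end Phi

section Exists

variable {f : X → Y} {O : Set Y} {y : Y} {A B : Set X}

lemma closedIn_inter_preimage {W : Set Y} (hW : W ⊆ O) (hA : ClosedIn (f ⁻¹' O) A) :
    ClosedIn (f ⁻¹' W) (A ∩ f ⁻¹' W) := by
  obtain ⟨C, hC, rfl⟩ := hA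
  refine ⟨C, hC, ?_⟩
  ext x
  simp only [Set.mem_inter_iff, Set.mem_preimage]
  exact ⟨fun h => ⟨h.1.1, h.2⟩, fun h => ⟨⟨h.1, hW h.2⟩, h.2⟩⟩

lemma exists_uryData (hN : NormalMap f) (hf : Continuous f) (hO : IsOpen O) (hy : y ∈ O)
    (hA : ClosedIn (f ⁻¹' O) A) (hB : ClosedIn (f ⁻¹' O) B) (hAB : A ∩ B = ∅) :
    ∃ d : UryData f O y A B, ∀ n k, k ≤ 2 ^ n →
      d.V (n + 1) (2 * k) = d.V n k ∩ f ⁻¹' (d.W (n + 1)) := by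
  classical
  let Q : ℕ → Set Y × (ℕ → Set X) → Prop := fun n p =>
    IsOpen p.1 ∧ y ∈ p.1 ∧ p.1 ⊆ O ∧
    (∀ k, k ≤ 2 ^ n → ∃ G : Set X, IsOpen G ∧ p.2 k = G ∩ f ⁻¹' p.1) ∧
    A ∩ f ⁻¹' p.1 ⊆ p.2 0 ∧
    (∀ k, k < 2 ^ n → closure (p.2 k) ∩ f ⁻¹' p.1 ⊆ p.2 (k + 1)) ∧
    closure (p.2 (2 ^ n)) ∩ B ∩ f ⁻¹' p.1 = ∅
  -- base level
  have hbase : ∃ p, Q 0 p := by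
    obtain ⟨Wa, hWao, hyWa, hWaO, Na, hNao, hNaW, hANa, hNaB⟩ :=
      insertion hN hf hO hy hA hB hAB
    have hA2 : ClosedIn (f ⁻¹' Wa) (A ∩ f ⁻¹' Wa) := closedIn_inter_preimage hWaO hA
    have hC2 : ClosedIn (f ⁻¹' Wa) (f ⁻¹' Wa \ Na) := by
      refine ⟨Naᶜ, hNao.isClosed_compl, ?_⟩
      ext x; simp only [Set.mem_diff, Set.mem_inter_iff, Set.mem_compl_iff]; tauto
    have hd2 : (A ∩ f ⁻¹' Wa) ∩ (f ⁻¹' Wa \ Na) = ∅ := by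
      ext x
      simp only [Set.mem_inter_iff, Set.mem_diff, Set.mem_empty_iff_false, iff_false, not_and]
      intro h1 h2
      exact fun h3 => (h3 (hANa h1)).elim
    obtain ⟨Wb, hWbo, hyWb, hWbWa, Nb, hNbo, hNbW, hANb, hNbdisj⟩ :=
      insertion hN hf hWao hyWa hA2 hC2 hd2
    refine ⟨(Wb, fun k => if k = 0 then Nb ∩ f ⁻¹' Wb else Na ∩ f ⁻¹' Wb),
      hWbo, hyWb, hWbWa.trans hWaO, ?_, ?_, ?_, ?_⟩
    · intro k _
      by_cases hk : k = 0
      · subst hk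
        exact ⟨Nb, hNbo, by simp only [reduceIte]⟩
      · exact ⟨Na, hNao, by simp only [if_neg hk]⟩
    · intro x hx
      have hxa : x ∈ (A ∩ f ⁻¹' Wa) ∩ f ⁻¹' Wb := ⟨⟨hx.1, hWbWa hx.2⟩, hx.2⟩
      simp only [reduceIte]
      exact ⟨hANb hxa, hx.2⟩
    · intro k hk
      have hk0 : k = 0 := by simpa using hk
      subst hk0
      simp only [reduceIte]
      intro x hx
      have hxcl : x ∈ closure Nb := closure_mono Set.inter_subset_left hx.1
      have hxb : x ∈ f ⁻¹' Wb := hx.2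
      by_contra hxn
      have hxNa : x ∉ Na := fun h => hxn ⟨h, hxb⟩
      have : x ∈ closure Nb ∩ (f ⁻¹' Wa \ Na) ∩ f ⁻¹' Wb :=
        ⟨⟨hxcl, ⟨hWbWa hxb, hxNa⟩⟩, hxb⟩
      rw [hNbdisj] at this
      exact this
    · simp only [pow_zero, if_neg one_ne_zero]
      ext x
      simp only [Set.mem_inter_iff, Set.mem_empty_iff_false, iff_false, not_and]
      rintro ⟨hxcl, hxB⟩ hxb
      have : x ∈ closure Na ∩ B ∩ f ⁻¹' Wa :=
        ⟨⟨closure_mono Set.inter_subset_left hxcl, hxB⟩, hWbWa hxb⟩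
      rw [hNaB] at this
      exact this
  -- inductive step
  have hstep : ∀ n p, Q n p → ∃ p', Q (n + 1) p' ∧ p'.1 ⊆ p.1 ∧
      ∀ k, k ≤ 2 ^ n → p'.2 (2 * k) = p.2 k ∩ f ⁻¹' p'.1 := by
    rintro n ⟨Wn, Vn⟩ ⟨hWno, hyWn, hWnO, hopenV, hAsub, hchain, hBd⟩
    dsimp only at hWno hyWn hWnO hopenV hAsub hchain hBd
    have hins : ∀ k : ℕ, ∃ q : Set Y × Set X, IsOpen q.1 ∧ y ∈ q.1 ∧ q.1 ⊆ Wn ∧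
        (k < 2 ^ n → IsOpen q.2 ∧ (closure (Vn k) ∩ f ⁻¹' Wn) ∩ f ⁻¹' q.1 ⊆ q.2 ∧
          closure q.2 ∩ (f ⁻¹' Wn \ Vn (k + 1)) ∩ f ⁻¹' q.1 = ∅) := by
      intro k
      by_cases hk : k < 2 ^ n
      · have hA' : ClosedIn (f ⁻¹' Wn) (closure (Vn k) ∩ f ⁻¹' Wn) :=
          ⟨closure (Vn k), isClosed_closure, rfl⟩
        have hC' : ClosedIn (f ⁻¹' Wn) (f ⁻¹' Wn \ Vn (k + 1)) := by
          obtain ⟨G, hGo, hGe⟩ := hopenV (k + 1) hk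
          refine ⟨Gᶜ, hGo.isClosed_compl, ?_⟩
          rw [hGe]
          ext z
          simp only [Set.mem_diff, Set.mem_inter_iff, Set.mem_compl_iff]
          tauto
        have hd' : (closure (Vn k) ∩ f ⁻¹' Wn) ∩ (f ⁻¹' Wn \ Vn (k + 1)) = ∅ := by
          rw [Set.eq_empty_iff_forall_notMem]
          rintro z ⟨⟨hz1, hz2⟩, hz3, hz4⟩
          exact hz4 (hchain k hk ⟨hz1, hz2⟩)
        obtain ⟨W', hW'o, hyW', hW'Wn, N, hNo, hNW, hsub, hdisj⟩ :=
          insertion hN hf hWno hyWn hA' hC' hd'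
        exact ⟨(W', N), hW'o, hyW', hW'Wn, fun _ => ⟨hNo, hsub, hdisj⟩⟩
      · exact ⟨(Wn, ∅), hWno, hyWn, subset_rfl, fun h => absurd h hk⟩
    choose WN hWNo hyWN hWNsub hWNspec using hins
    have hW'o : IsOpen (Wn ∩ ⋂ k ∈ Finset.range (2 ^ n), (WN k).1) :=
      hWno.inter (isOpen_biInter_finset fun k _ => hWNo k)
    set W' : Set Y := Wn ∩ ⋂ k ∈ Finset.range (2 ^ n), (WN k).1 with hW'def
    have hyW' : y ∈ W' := ⟨hyWn, Set.mem_biInter fun k _ => hyWN k⟩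
    have hW'Wn : W' ⊆ Wn := Set.inter_subset_left
    have hW'k : ∀ k, k < 2 ^ n → W' ⊆ (WN k).1 := by
      intro k hk
      refine Set.inter_subset_right.trans ?_
      intro z hz
      exact Set.mem_iInter₂.1 hz k (Finset.mem_range.2 hk)
    set V' : ℕ → Set X := fun j =>
      if j % 2 = 0 then Vn (j / 2) ∩ f ⁻¹' W' else (WN (j / 2)).2 ∩ f ⁻¹' W' with hV'def
    have hVeven : ∀ k, V' (2 * k) = Vn k ∩ f ⁻¹' W' := by
      intro k
      have e1 : (2 * k) % 2 = 0 := by omega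
      have e2 : 2 * k / 2 = k := by omega
      rw [hV'def]
      simp only [e1, e2, reduceIte]
    have hVodd : ∀ k, V' (2 * k + 1) = (WN k).2 ∩ f ⁻¹' W' := by
      intro k
      have e1 : ¬((2 * k + 1) % 2 = 0) := by omega
      have e2 : (2 * k + 1) / 2 = k := by omega
      rw [hV'def]
      simp only [e2, if_neg e1]
    refine ⟨(W', V'), ⟨hW'o, hyW', hW'Wn.trans hWnO, ?_, ?_, ?_, ?_⟩, hW'Wn, ?_⟩
    · -- openness of V'
      dsimp only
      intro j hj
      obtain ⟨k, rfl | rfl⟩ := Nat.even_or_odd' j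
      · have hk : k ≤ 2 ^ n := by
          have : (2:ℕ) ^ (n+1) = 2 * 2 ^ n := by ring
          omega
        obtain ⟨G, hGo, hGe⟩ := hopenV k hk
        refine ⟨G, hGo, ?_⟩
        rw [hVeven, hGe]
        ext z
        simp only [Set.mem_inter_iff, Set.mem_preimage]
        exact ⟨fun h => ⟨h.1.1, h.2⟩, fun h => ⟨⟨h.1, hW'Wn h.2⟩, h.2⟩⟩
      · have hk : k < 2 ^ n := by
          have : (2:ℕ) ^ (n+1) = 2 * 2 ^ n := by ring
          omega
        exact ⟨(WN k).2, (hWNspec k hk).1, hVodd k⟩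
    · -- A ⊆ V' 0
      dsimp only
      intro x hx
      have h0 : V' (2 * 0) = Vn 0 ∩ f ⁻¹' W' := hVeven 0
      rw [show (2 * 0 : ℕ) = 0 by norm_num] at h0
      rw [h0]
      exact ⟨hAsub ⟨hx.1, hW'Wn hx.2⟩, hx.2⟩
    · -- chain
      dsimp only
      intro j hj
      obtain ⟨k, rfl | rfl⟩ := Nat.even_or_odd' j
      · have hk : k < 2 ^ n := by
          have : (2:ℕ) ^ (n+1) = 2 * 2 ^ n := by ring
          omega
        rw [hVeven k, hVodd k]
        intro x hx
        have hxcl : x ∈ closure (Vn k) := closure_mono Set.inter_subset_left hx.1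
        have hxW' : x ∈ f ⁻¹' W' := hx.2
        have hx1 : x ∈ (closure (Vn k) ∩ f ⁻¹' Wn) ∩ f ⁻¹' (WN k).1 :=
          ⟨⟨hxcl, hW'Wn hxW'⟩, hW'k k hk hxW'⟩
        exact ⟨(hWNspec k hk).2.1 hx1, hxW'⟩
      · have hk : k < 2 ^ n := by
          have : (2:ℕ) ^ (n+1) = 2 * 2 ^ n := by ring
          omega
        have e : 2 * k + 1 + 1 = 2 * (k + 1) := by ring
        rw [hVodd k, e, hVeven (k + 1)]
        intro x hx
        have hxcl : x ∈ closure (WN k).2 := closure_mono Set.inter_subset_left hx.1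
        have hxW' : x ∈ f ⁻¹' W' := hx.2
        by_contra hxn
        have hxnV : x ∉ Vn (k + 1) := fun h => hxn ⟨h, hxW'⟩
        have : x ∈ closure (WN k).2 ∩ (f ⁻¹' Wn \ Vn (k + 1)) ∩ f ⁻¹' (WN k).1 :=
          ⟨⟨hxcl, ⟨hW'Wn hxW', hxnV⟩⟩, hW'k k hk hxW'⟩
        rw [(hWNspec k hk).2.2] at this
        exact this
    · -- B disjoint
      dsimp only
      have e : (2:ℕ) ^ (n + 1) = 2 * 2 ^ n := by ring
      rw [e, hVeven]
      ext x
      simp only [Set.mem_inter_iff, Set.mem_empty_iff_false, iff_false, not_and]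
      rintro ⟨hxcl, hxB⟩ hxW'
      have : x ∈ closure (Vn (2 ^ n)) ∩ B ∩ f ⁻¹' Wn :=
        ⟨⟨closure_mono Set.inter_subset_left hxcl, hxB⟩, hW'Wn hxW'⟩
      rw [hBd] at this
      exact this
    · -- consistency
      dsimp only
      intro k hk
      exact hVeven k
  -- assemble the sequence
  obtain ⟨p0, hp0⟩ := hbase
  have key : ∀ n (p : {p // Q n p}), {p' : {q // Q (n + 1) q} // p'.1.1 ⊆ p.1.1 ∧
      ∀ k, k ≤ 2 ^ n → p'.1.2 (2 * k) = p.1.2 k ∩ f ⁻¹' p'.1.1} := by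
    intro n p
    have h := hstep n p.1 p.2
    exact ⟨⟨h.choose, h.choose_spec.1⟩, h.choose_spec.2.1, h.choose_spec.2.2⟩
  let seq : ∀ n, {p // Q n p} := fun n => Nat.rec ⟨p0, hp0⟩ (fun n p => (key n p).1) n
  refine ⟨⟨fun n => (seq n).1.1, fun n => (seq n).1.2,
    fun n => (seq n).2.1, fun n => (seq n).2.2.1, fun n => (seq n).2.2.2.1,
    fun n => (key n (seq n)).2.1,
    fun n => (seq n).2.2.2.2.1, fun n => (seq n).2.2.2.2.2.1,
    fun n => (seq n).2.2.2.2.2.2.1, fun n => (seq n).2.2.2.2.2.2.2⟩, ?_⟩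
  intro n k hk
  exact (key n (seq n)).2.2 k hk

end Exists

section UrysohnLemma

variable {f : X → Y} {O : Set Y} {y : Y} {A B : Set X}

lemma urysohn (hN : NormalMap f) (hf : Continuous f) (hO : IsOpen O) (hy : y ∈ O)
    (hA : ClosedIn (f ⁻¹' O) A) (hB : ClosedIn (f ⁻¹' O) B) (hAB : A ∩ B = ∅) :
    ∃ ψ : X → ℝ, (∀ x, 0 ≤ ψ x ∧ ψ x ≤ 1) ∧ FContinuousAt f ψ y ∧
      ∃ W : Set Y, IsOpen W ∧ y ∈ W ∧ W ⊆ O ∧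
        (∀ x ∈ A ∩ f ⁻¹' W, ψ x = 0) ∧ (∀ x ∈ B ∩ f ⁻¹' W, ψ x = 1) := by
  obtain ⟨d, hcons⟩ := exists_uryData hN hf hO hy hA hB hAB
  refine ⟨d.phi, fun x => ⟨d.phi_nonneg, d.phi_le_one⟩, ?_,
    d.W 0, d.isOpenW 0, d.memW 0, d.WsubO 0, ?_, ?_⟩
  · apply fContinuousAt_of
    intro ε hε
    obtain ⟨n, hn⟩ := pow_unbounded_of_one_lt (2 / ε) (one_lt_two (α := ℝ))
    refine ⟨d.W n, d.isOpenW n, d.memW n, fun x hx => ?_⟩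
    obtain ⟨G, hGo, hxG, hGb⟩ := d.osc_bound hcons hf hx
    refine ⟨G, hGo, hxG, fun z hz => (hGb z hz).trans ?_⟩
    have h2n : (0 : ℝ) < 2 ^ n := by positivity
    rw [div_le_iff₀ h2n]
    rw [div_lt_iff₀ hε] at hn
    nlinarith
  · intro x hx
    have h1 : d.phi x ≤ (0 : ℕ) / 2 ^ 0 := d.phi_le (by norm_num) (d.AsubV 0 hx)
    have h2 : ((0 : ℕ) : ℝ) / 2 ^ 0 = 0 := by norm_num
    rw [h2] at h1
    exact le_antisymm h1 d.phi_nonneg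
  · rintro x ⟨hxB, hxW⟩
    refine d.phi_eq_one hcons (n := 0) hxW ?_
    intro k hk hxk
    have hx1 : x ∈ d.V 0 1 := d.Vmono (n := 0) (by norm_num at hk ⊢; omega) (by norm_num) hxk
    have : x ∈ closure (d.V 0 (2 ^ 0)) ∩ B ∩ f ⁻¹' (d.W 0) := by
      rw [pow_zero]
      exact ⟨⟨subset_closure hx1, hxB⟩, hxW⟩
    rw [d.Bdisj 0] at this
    exact this

end UrysohnLemma

section Forward

variable {f : X → Y} {y : Y}

lemma fContinuousAt_add_affine {g ψ : X → ℝ} {a b Cg : ℝ}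
    (hg : FContinuousAt f g y) (hbg : ∀ x, |g x| ≤ Cg)
    (hψ : FContinuousAt f ψ y) (hbψ : ∀ x, |ψ x| ≤ 1) :
    FContinuousAt f (fun x => g x + a * ψ x + b) y := by
  apply fContinuousAt_of
  intro ε hε
  obtain ⟨W1, hW1o, hyW1, hg1⟩ := hg.extract hbg (show (0:ℝ) < ε / 4 by positivity)
  obtain ⟨W2, hW2o, hyW2, hψ2⟩ := hψ.extract hbψ
    (show (0:ℝ) < ε / (4 * (|a| + 1)) by positivity)
  refine ⟨W1 ∩ W2, hW1o.inter hW2o, ⟨hyW1, hyW2⟩, fun x hx => ?_⟩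
  obtain ⟨G1, hG1o, hxG1, hG1⟩ := hg1 x hx.1
  obtain ⟨G2, hG2o, hxG2, hG2⟩ := hψ2 x hx.2
  refine ⟨G1 ∩ G2, hG1o.inter hG2o, ⟨hxG1, hxG2⟩, fun z hz => ?_⟩
  have e : g x + a * ψ x + b - (g z + a * ψ z + b) = (g x - g z) + a * (ψ x - ψ z) := by
    ring
  rw [e]
  have h1 : |g x - g z| < ε / 4 := hG1 z hz.1
  have h2 : |ψ x - ψ z| < ε / (4 * (|a| + 1)) := hG2 z hz.2
  have h3 : |a * (ψ x - ψ z)| ≤ (|a| + 1) * (ε / (4 * (|a| + 1))) := by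
    rw [abs_mul]
    have ha : (0:ℝ) ≤ |a| := abs_nonneg a
    nlinarith [abs_nonneg (ψ x - ψ z)]
  have h4 : (|a| + 1) * (ε / (4 * (|a| + 1))) = ε / 4 := by
    field_simp
  calc |g x - g z + a * (ψ x - ψ z)| ≤ |g x - g z| + |a * (ψ x - ψ z)| := abs_add_le _ _
    _ ≤ ε := by rw [h4] at h3; linarith

lemma extension (hN : NormalMap f) (hf : Continuous f) {O : Set Y} (hO : IsOpen O)
    {F : Set X} (hFne : F.Nonempty) (hFcl : ClosedIn (f ⁻¹' O) F) (hy : y ∈ O)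
    (φt : X → ℝ) (hbd : ∃ C : ℝ, ∀ x ∈ F, |φt x| ≤ C)
    (hcont : ∀ ε > (0 : ℝ), ∃ W : Set Y, IsOpen W ∧ y ∈ W ∧ W ⊆ O ∧
      oscOnWithin F φt (F ∩ f ⁻¹' W) < ε) :
    ∃ φ : X → ℝ, (∃ C : ℝ, ∀ x, |φ x| ≤ C) ∧ FContinuousAt f φ y ∧
      (∃ G : Set Y, y ∈ G ∧ G ⊆ O ∧
        (∃ W : ℕ → Set Y, (∀ n, IsOpen (W n) ∧ W n ⊆ O) ∧ G = ⋂ n, W n) ∧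
        ∀ x ∈ F ∩ f ⁻¹' G, φt x = φ x) ∧
      sSup ((fun x => |φ x|) '' (Set.univ : Set X)) ≤ sSup ((fun x => |φt x|) '' F) ∧
      ∀ ε > (0 : ℝ), ∃ Oε : Set Y, IsOpen Oε ∧ y ∈ Oε ∧ Oε ⊆ O ∧
        sSup ((fun x => |φt x - φ x|) '' (F ∩ f ⁻¹' Oε)) < ε := by
  classical
  obtain ⟨C, hC⟩ := hbd
  set M : ℝ := sSup ((fun x => |φt x|) '' F) with hMdef
  have hMub : ∀ x ∈ F, |φt x| ≤ M := by
    intro x hx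
    exact le_csSup ⟨C, by rintro v ⟨z, hz, rfl⟩; exact hC z hz⟩ (Set.mem_image_of_mem _ hx)
  obtain ⟨x₀, hx₀⟩ := hFne
  have hM0 : 0 ≤ M := le_trans (abs_nonneg _) (hMub x₀ hx₀)
  rcases eq_or_lt_of_le hM0 with hM | hM
  · -- M = 0 : take φ = 0
    refine ⟨fun _ => 0, ⟨0, by simp⟩, fContinuousAt_const, ⟨O, hy, subset_rfl,
      ⟨fun _ => O, fun _ => ⟨hO, subset_rfl⟩, by rw [Set.iInter_const]⟩, ?_⟩, ?_, ?_⟩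
    · intro x hx
      have := hMub x hx.1
      rw [← hM] at this
      have := abs_nonneg (φt x)
      have : |φt x| = 0 := le_antisymm (by linarith) (by positivity)
      simpa [abs_eq_zero] using this
    · refine Real.sSup_le ?_ hM0
      rintro v ⟨z, -, rfl⟩
      simp only [abs_zero]
      exact hM0
    · intro ε hε
      refine ⟨O, hO, hy, subset_rfl, lt_of_le_of_lt (Real.sSup_le ?_ le_rfl) hε⟩
      rintro v ⟨z, hz, rfl⟩
      have h1 := hMub z hz.1
      rw [← hM] at h1
      have := abs_nonneg (φt z)
      simp only [sub_zero]
      linarith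
  · -- main case 0 < M
    set q : ℝ := 2 / 3 with hqdef
    have hq0 : (0:ℝ) < q := by norm_num
    have hq1 : q < 1 := by norm_num
    set P : ℕ → Set Y × (X → ℝ) → Prop := fun n p =>
      IsOpen p.1 ∧ y ∈ p.1 ∧ p.1 ⊆ O ∧
      (∀ x, |p.2 x| ≤ M - M * q ^ n) ∧
      FContinuousAt f p.2 y ∧
      ∀ x ∈ F ∩ f ⁻¹' p.1, |φt x - p.2 x| ≤ M * q ^ n with hPdef
    have hbase : P 0 (O, fun _ => 0) := by
      refine ⟨hO, hy, subset_rfl, fun x => by simp, fContinuousAt_const, fun x hx => ?_⟩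
      simp only [pow_zero, mul_one, sub_zero]
      exact hMub x hx.1
    have hstep : ∀ n p, P n p → ∃ p', P (n + 1) p' ∧ p'.1 ⊆ p.1 ∧
        ∀ x, |p'.2 x - p.2 x| ≤ M * q ^ n / 3 := by
      rintro n ⟨Ω, g⟩ ⟨hΩo, hyΩ, hΩO, hgbd, hgc, hrem⟩
      dsimp only at hΩo hyΩ hΩO hgbd hgc hrem
      set Mn : ℝ := M * q ^ n with hMndef
      have hMn : 0 < Mn := by positivity
      have hgM : ∀ x, |g x| ≤ M := fun x =>
        le_trans (hgbd x) (by nlinarith [pow_pos hq0 n])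
      obtain ⟨Wa, hWao, hyWa, hWaO, hosca⟩ := hcont (Mn / 24) (by positivity)
      obtain ⟨Wb, hWbo, hyWb, hptb⟩ := hgc.extract hgM (show (0:ℝ) < Mn / 24 by positivity)
      set W₁ : Set Y := Ω ∩ Wa ∩ Wb with hW₁def
      have hW₁o : IsOpen W₁ := (hΩo.inter hWao).inter hWbo
      have hyW₁ : y ∈ W₁ := ⟨⟨hyΩ, hyWa⟩, hyWb⟩
      have hW₁O : W₁ ⊆ O := fun z hz => hΩO hz.1.1
      have hW₁Ω : W₁ ⊆ Ω := fun z hz => hz.1.1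
      have hr : ∀ x ∈ F ∩ f ⁻¹' W₁, ∃ G : Set X, IsOpen G ∧ x ∈ G ∧
          ∀ z ∈ G ∩ F, |(φt x - g x) - (φt z - g z)| < Mn / 12 := by
        intro x hx
        have hxFa : x ∈ F ∩ f ⁻¹' Wa := ⟨hx.1, hx.2.1.2⟩
        obtain ⟨G1, hG1o, hxG1, hG1⟩ := extract_of_oscOnWithin_lt (C := M) hMub
          (fun z hz => hMub z hz.1) hxFa hosca
        obtain ⟨G2, hG2o, hxG2, hG2⟩ := hptb x hx.2.2
        refine ⟨G1 ∩ G2, hG1o.inter hG2o, ⟨hxG1, hxG2⟩, fun z hz => ?_⟩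
        have h1 : |φt x - φt z| < Mn / 24 := hG1 z ⟨hz.1.1, hz.2⟩
        have h2 : |g x - g z| < Mn / 24 := hG2 z hz.1.2
        have e : (φt x - g x) - (φt z - g z) = (φt x - φt z) - (g x - g z) := by ring
        rw [e]
        calc |(φt x - φt z) - (g x - g z)| ≤ |φt x - φt z| + |g x - g z| := abs_sub _ _
          _ < Mn / 12 := by linarith
      set Sm : Set X := {x | (x ∈ F ∩ f ⁻¹' W₁) ∧ φt x - g x ≤ -(Mn / 3)} with hSmdef
      set Sp : Set X := {x | (x ∈ F ∩ f ⁻¹' W₁) ∧ Mn / 3 ≤ φt x - g x} with hSpdef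
      obtain ⟨CF, hCFc, hCFe⟩ := closedIn_inter_preimage hW₁O hFcl
      have hA' : ClosedIn (f ⁻¹' W₁) (closure Sm ∩ (F ∩ f ⁻¹' W₁)) :=
        ⟨closure Sm ∩ CF, isClosed_closure.inter hCFc, by rw [Set.inter_assoc, ← hCFe]⟩
      have hB' : ClosedIn (f ⁻¹' W₁) (closure Sp ∩ (F ∩ f ⁻¹' W₁)) :=
        ⟨closure Sp ∩ CF, isClosed_closure.inter hCFc, by rw [Set.inter_assoc, ← hCFe]⟩
      have hAB' : (closure Sm ∩ (F ∩ f ⁻¹' W₁)) ∩ (closure Sp ∩ (F ∩ f ⁻¹' W₁)) = ∅ := by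
        rw [Set.eq_empty_iff_forall_notMem]
        rintro x ⟨⟨hxm, hxF⟩, hxp, -⟩
        obtain ⟨G, hGo, hxG, hG⟩ := hr x hxF
        obtain ⟨z1, hz1G, hz1⟩ := mem_closure_iff.1 hxm G hGo hxG
        obtain ⟨z2, hz2G, hz2⟩ := mem_closure_iff.1 hxp G hGo hxG
        have h1 := abs_lt.1 (hG z1 ⟨hz1G, hz1.1.1⟩)
        have h2 := abs_lt.1 (hG z2 ⟨hz2G, hz2.1.1⟩)
        linarith [hz1.2, hz2.2]
      obtain ⟨ψ, hψ01, hψc, W₂, hW₂o, hyW₂, hW₂W₁, hψ0, hψ1⟩ :=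
        urysohn hN hf hW₁o hyW₁ hA' hB' hAB'
      have hψabs : ∀ x, |ψ x| ≤ 1 := fun x => by
        obtain ⟨h01, h11⟩ := hψ01 x
        rw [abs_le]; constructor <;> linarith
      refine ⟨(W₂, fun x => g x + (2 * Mn / 3) * ψ x + (-(Mn / 3))),
        ⟨hW₂o, hyW₂, hW₂W₁.trans hW₁O, ?_, ?_, ?_⟩, hW₂W₁.trans hW₁Ω, ?_⟩
      · -- global bound
        intro x
        dsimp only
        obtain ⟨h01, h11⟩ := hψ01 x
        have h1 : |(2 * Mn / 3) * ψ x + (-(Mn / 3))| ≤ Mn / 3 := by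
          rw [abs_le]; constructor <;> nlinarith
        have e2 : g x + (2 * Mn / 3) * ψ x + (-(Mn / 3)) =
            g x + ((2 * Mn / 3) * ψ x + (-(Mn / 3))) := by ring
        have e3 : M - M * q ^ (n + 1) = (M - M * q ^ n) + Mn / 3 := by
          rw [hMndef, hqdef]; ring
        rw [e2, e3]
        calc |g x + ((2 * Mn / 3) * ψ x + (-(Mn / 3)))|
            ≤ |g x| + |(2 * Mn / 3) * ψ x + (-(Mn / 3))| := abs_add_le _ _
          _ ≤ (M - M * q ^ n) + Mn / 3 := add_le_add (hgbd x) h1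
      · -- f-continuity
        exact fContinuousAt_add_affine hgc hgM hψc hψabs
      · -- remainder bound at level n+1
        intro x hx
        dsimp only
        have hxW₁ : x ∈ F ∩ f ⁻¹' W₁ := ⟨hx.1, hW₂W₁ hx.2⟩
        have hxΩ : x ∈ F ∩ f ⁻¹' Ω := ⟨hx.1, hW₁Ω (hW₂W₁ hx.2)⟩
        have hrx := abs_le.1 (hrem x hxΩ)
        have hq1e : M * q ^ (n + 1) = 2 * Mn / 3 := by rw [hMndef, hqdef]; ring
        rw [hq1e]
        rcases le_or_gt (φt x - g x) (-(Mn / 3)) with hc1 | hc1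
        · have hψx : ψ x = 0 := hψ0 x
            ⟨⟨subset_closure ⟨hxW₁, hc1⟩, hxW₁⟩, hx.2⟩
          have e : φt x - (g x + (2 * Mn / 3) * ψ x + (-(Mn / 3))) =
              (φt x - g x) + Mn / 3 - (2 * Mn / 3) * ψ x := by ring
          rw [e, hψx, abs_le]
          constructor <;> [nlinarith; nlinarith]
        · rcases le_or_gt (Mn / 3) (φt x - g x) with hc2 | hc2
          · have hψx : ψ x = 1 := hψ1 x
              ⟨⟨subset_closure ⟨hxW₁, hc2⟩, hxW₁⟩, hx.2⟩
            have e : φt x - (g x + (2 * Mn / 3) * ψ x + (-(Mn / 3))) =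
                (φt x - g x) + Mn / 3 - (2 * Mn / 3) * ψ x := by ring
            rw [e, hψx, abs_le]
            constructor <;> [nlinarith; nlinarith]
          · obtain ⟨h01, h11⟩ := hψ01 x
            have e : φt x - (g x + (2 * Mn / 3) * ψ x + (-(Mn / 3))) =
                (φt x - g x) - ((2 * Mn / 3) * ψ x - Mn / 3) := by ring
            rw [e, abs_le]
            constructor <;> nlinarith
      · -- increment bound
        intro x
        dsimp only
        obtain ⟨h01, h11⟩ := hψ01 x
        have e : g x + (2 * Mn / 3) * ψ x + (-(Mn / 3)) - g x =
            (2 * Mn / 3) * ψ x - Mn / 3 := by ring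
        have e2 : M * q ^ n / 3 = Mn / 3 := by rw [hMndef]
        rw [e, e2, abs_le]
        constructor <;> nlinarith
    -- assemble the recursion
    have key : ∀ n (p : {p // P n p}), {p' : {p // P (n + 1) p} //
        p'.1.1 ⊆ p.1.1 ∧ ∀ x, |p'.1.2 x - p.1.2 x| ≤ M * q ^ n / 3} := by
      intro n p
      have h := hstep n p.1 p.2
      exact ⟨⟨h.choose, h.choose_spec.1⟩, h.choose_spec.2.1, h.choose_spec.2.2⟩
    let seq : ∀ n, {p // P n p} :=
      fun n => Nat.rec ⟨(O, fun _ => 0), hbase⟩ (fun n p => (key n p).1) n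
    set Ω : ℕ → Set Y := fun n => (seq n).1.1 with hΩdef
    set g : ℕ → X → ℝ := fun n => (seq n).1.2 with hgdef
    have hΩo : ∀ n, IsOpen (Ω n) := fun n => (seq n).2.1
    have hyΩ : ∀ n, y ∈ Ω n := fun n => (seq n).2.2.1
    have hΩO : ∀ n, Ω n ⊆ O := fun n => (seq n).2.2.2.1
    have hgbd : ∀ n x, |g n x| ≤ M - M * q ^ n := fun n x => (seq n).2.2.2.2.1 x
    have hgc : ∀ n, FContinuousAt f (g n) y := fun n => (seq n).2.2.2.2.2.1
    have hrem : ∀ n, ∀ x ∈ F ∩ f ⁻¹' (Ω n), |φt x - g n x| ≤ M * q ^ n :=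
      fun n => (seq n).2.2.2.2.2.2
    have hdiff : ∀ n x, |g (n + 1) x - g n x| ≤ M * q ^ n / 3 :=
      fun n x => (key n (seq n)).2.2 x
    have hgM : ∀ n x, |g n x| ≤ M := fun n x =>
      le_trans (hgbd n x) (by nlinarith [pow_pos hq0 n])
    set dta : ℕ → X → ℝ := fun n x => g (n + 1) x - g n x with hdta
    have hgeosum : Summable (fun n : ℕ => q ^ n) :=
      summable_geometric_of_lt_one (le_of_lt hq0) hq1
    have hsummable : ∀ x, Summable (fun n => dta n x) := by
      intro x
      apply Summable.of_norm_bounded (g := fun n => (M / 3) * q ^ n) (hgeosum.mul_left _)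
      intro n
      rw [Real.norm_eq_abs]
      calc |dta n x| ≤ M * q ^ n / 3 := hdiff n x
        _ = (M / 3) * q ^ n := by ring
    set φ : X → ℝ := fun x => g 0 x + ∑' n, dta n x with hφdef
    have htel : ∀ N x, g N x = g 0 x + ∑ i ∈ Finset.range N, dta i x := by
      intro N x
      induction N with
      | zero => simp
      | succ N ih =>
        rw [Finset.sum_range_succ, ← add_assoc, ← ih]
        simp only [hdta]
        ring
    have hgeo : ∑' (i : ℕ), q ^ i = 3 := by
      rw [tsum_geometric_of_lt_one (le_of_lt hq0) hq1, hqdef]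
      norm_num
    have htail : ∀ N x, |φ x - g N x| ≤ M * q ^ N := by
      intro N x
      have hsplit : ∑ i ∈ Finset.range N, dta i x + ∑' i, dta (i + N) x = ∑' i, dta i x :=
        Summable.sum_add_tsum_nat_add N (hsummable x)
      have e1 : φ x - g N x = ∑' i, dta (i + N) x := by
        simp only [hφdef]
        rw [htel N x]
        linarith [hsplit]
      have hbound : ∀ i, |dta (i + N) x| ≤ ((M / 3) * q ^ N) * q ^ i := by
        intro i
        calc |dta (i + N) x| ≤ M * q ^ (i + N) / 3 := hdiff _ x
          _ = ((M / 3) * q ^ N) * q ^ i := by rw [pow_add]; ring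
      have hsum2 : Summable (fun i => |dta (i + N) x|) :=
        Summable.of_nonneg_of_le (fun i => abs_nonneg _) hbound (hgeosum.mul_left _)
      calc |φ x - g N x| = |∑' i, dta (i + N) x| := by rw [e1]
        _ ≤ ∑' i, |dta (i + N) x| := by
            have h := norm_tsum_le_tsum_norm (f := fun i => dta (i + N) x)
              (by simpa [Real.norm_eq_abs] using hsum2)
            simpa [Real.norm_eq_abs] using h
        _ ≤ ∑' i, ((M / 3) * q ^ N) * q ^ i :=
            Summable.tsum_le_tsum hbound hsum2 (hgeosum.mul_left _)
        _ = ((M / 3) * q ^ N) * ∑' i, q ^ i := tsum_mul_left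
        _ = M * q ^ N := by rw [hgeo]; ring
    have hφbd : ∀ x, |φ x| ≤ M := by
      intro x
      have h2 := htail 0 x
      have h3 := hgbd 0 x
      have e : φ x = (φ x - g 0 x) + g 0 x := by ring
      rw [e]
      calc |(φ x - g 0 x) + g 0 x| ≤ |φ x - g 0 x| + |g 0 x| := abs_add_le _ _
        _ ≤ M := by
            have e0 : (q:ℝ) ^ 0 = 1 := pow_zero q
            rw [e0] at h2 h3
            linarith
    have hφc : FContinuousAt f φ y := by
      apply fContinuousAt_of
      intro ε hε
      obtain ⟨N, hN⟩ := exists_pow_lt_of_lt_one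
        (show (0:ℝ) < ε / (4 * M) by positivity) hq1
      have hN' : M * q ^ N ≤ ε / 4 := by
        rw [lt_div_iff₀ (by positivity : (0:ℝ) < 4 * M)] at hN
        nlinarith
      obtain ⟨W, hWo, hyW, hpt⟩ := (hgc N).extract (hgM N)
        (show (0:ℝ) < ε / 4 by positivity)
      refine ⟨W, hWo, hyW, fun x hx => ?_⟩
      obtain ⟨G, hGo, hxG, hG⟩ := hpt x hx
      refine ⟨G, hGo, hxG, fun z hz => ?_⟩
      have h1 := htail N x
      have h2 := htail N z
      have h3 := hG z hz
      have e : φ x - φ z = ((φ x - g N x) - (φ z - g N z)) + (g N x - g N z) := by ring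
      rw [e]
      calc |((φ x - g N x) - (φ z - g N z)) + (g N x - g N z)|
          ≤ |(φ x - g N x) - (φ z - g N z)| + |g N x - g N z| := abs_add_le _ _
        _ ≤ (|φ x - g N x| + |φ z - g N z|) + |g N x - g N z| :=
            add_le_add_left (abs_sub _ _) _
        _ ≤ ε := by linarith
    refine ⟨φ, ⟨M, hφbd⟩, hφc, ⟨⋂ n, Ω n, Set.mem_iInter.2 hyΩ,
      (Set.iInter_subset _ 0).trans (hΩO 0), ⟨Ω, fun n => ⟨hΩo n, hΩO n⟩, rfl⟩, ?_⟩, ?_, ?_⟩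
    · -- agreement on the Gδ-set
      intro x hx
      have hxn : ∀ n, x ∈ F ∩ f ⁻¹' (Ω n) := fun n => ⟨hx.1, Set.mem_iInter.1 hx.2 n⟩
      by_contra hne
      have hpos : 0 < |φt x - φ x| := abs_pos.2 (sub_ne_zero.2 hne)
      obtain ⟨N, hN⟩ := exists_pow_lt_of_lt_one
        (show (0:ℝ) < |φt x - φ x| / (2 * M) by positivity) hq1
      have h1 := hrem N x (hxn N)
      have h2 := htail N x
      have hle : |φt x - φ x| ≤ 2 * (M * q ^ N) := by
        have e : φt x - φ x = (φt x - g N x) - (φ x - g N x) := by ring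
        rw [e]
        calc |(φt x - g N x) - (φ x - g N x)| ≤ |φt x - g N x| + |φ x - g N x| :=
            abs_sub _ _
          _ ≤ 2 * (M * q ^ N) := by linarith
      rw [lt_div_iff₀ (by positivity : (0:ℝ) < 2 * M)] at hN
      nlinarith
    · exact Real.sSup_le (by rintro v ⟨z, -, rfl⟩; exact hφbd z) hM0
    · intro ε hε
      obtain ⟨N, hN⟩ := exists_pow_lt_of_lt_one
        (show (0:ℝ) < ε / (2 * M) by positivity) hq1
      refine ⟨Ω N, hΩo N, hyΩ N, hΩO N, ?_⟩
      have hb : ∀ x ∈ F ∩ f ⁻¹' (Ω N), |φt x - φ x| ≤ 2 * (M * q ^ N) := by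
        intro x hx
        have h1 := hrem N x hx
        have h2 := htail N x
        have e : φt x - φ x = (φt x - g N x) - (φ x - g N x) := by ring
        rw [e]
        calc |(φt x - g N x) - (φ x - g N x)| ≤ |φt x - g N x| + |φ x - g N x| :=
            abs_sub _ _
          _ ≤ 2 * (M * q ^ N) := by linarith
      refine lt_of_le_of_lt (b := 2 * (M * q ^ N)) (Real.sSup_le ?_ (by positivity)) ?_
      · rintro v ⟨z, hz, rfl⟩
        exact hb z hz
      · rw [lt_div_iff₀ (by positivity : (0:ℝ) < 2 * M)] at hN
        nlinarith

end Forward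

section Backward

variable {f : X → Y}

lemma backward_direction (hf : Continuous f)
    (hExt : ∀ O : Set Y, IsOpen O → ∀ F : Set X, F.Nonempty → ClosedIn (f ⁻¹' O) F →
      ∀ y ∈ O, ∀ φt : X → ℝ,
        (∃ C : ℝ, ∀ x ∈ F, |φt x| ≤ C) →
        (∀ ε > (0 : ℝ), ∃ W : Set Y, IsOpen W ∧ y ∈ W ∧ W ⊆ O ∧
          oscOnWithin F φt (F ∩ f ⁻¹' W) < ε) →
        ∃ φ : X → ℝ, (∃ C : ℝ, ∀ x, |φ x| ≤ C) ∧ FContinuousAt f φ y ∧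
          (∃ G : Set Y, y ∈ G ∧ G ⊆ O ∧
            (∃ W : ℕ → Set Y, (∀ n, IsOpen (W n) ∧ W n ⊆ O) ∧ G = ⋂ n, W n) ∧
            ∀ x ∈ F ∩ f ⁻¹' G, φt x = φ x) ∧
          sSup ((fun x => |φ x|) '' (Set.univ : Set X)) ≤ sSup ((fun x => |φt x|) '' F) ∧
          ∀ ε > (0 : ℝ), ∃ Oε : Set Y, IsOpen Oε ∧ y ∈ Oε ∧ Oε ⊆ O ∧
            sSup ((fun x => |φt x - φ x|) '' (F ∩ f ⁻¹' Oε)) < ε) :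
    NormalMap f := by
  classical
  intro O hO A B hA hB hAB y hy
  by_cases hFe : A ∪ B = ∅
  · have hAe : A = ∅ := by
      rw [Set.union_empty_iff] at hFe
      exact hFe.1
    have hBe : B = ∅ := by
      rw [Set.union_empty_iff] at hFe
      exact hFe.2
    refine ⟨O, hO, hy, subset_rfl, ∅, ∅, ⟨∅, isOpen_empty, (Set.empty_inter _).symm⟩,
      ⟨∅, isOpen_empty, (Set.empty_inter _).symm⟩, ?_, ?_, Set.empty_inter ∅⟩
    · rw [hAe, Set.empty_inter]
    · rw [hBe, Set.empty_inter]
  · have hFne : (A ∪ B).Nonempty := Set.nonempty_iff_ne_empty.2 hFe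
    obtain ⟨CA, hCAc, hCAe⟩ := hA
    obtain ⟨CB, hCBc, hCBe⟩ := hB
    have hFcl : ClosedIn (f ⁻¹' O) (A ∪ B) :=
      ⟨CA ∪ CB, hCAc.union hCBc, by rw [hCAe, hCBe, Set.union_inter_distrib_right]⟩
    set φt : X → ℝ := fun x => if x ∈ B then 1 else 0 with hφtdef
    have hφt01 : ∀ x, φt x = 0 ∨ φt x = 1 := by
      intro x
      by_cases hx : x ∈ B <;> simp [hφtdef, hx]
    have hφtA : ∀ x ∈ A, φt x = 0 := by
      intro x hx
      have hxB : x ∉ B := fun hB' => (Set.eq_empty_iff_forall_notMem.1 hAB x) ⟨hx, hB'⟩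
      simp [hφtdef, hxB]
    have hφtB : ∀ x ∈ B, φt x = 1 := by
      intro x hx
      simp [hφtdef, hx]
    have hbd : ∃ C : ℝ, ∀ x ∈ A ∪ B, |φt x| ≤ C := by
      refine ⟨1, fun x _ => ?_⟩
      rcases hφt01 x with h | h <;> rw [h] <;> norm_num
    have hcont : ∀ ε > (0 : ℝ), ∃ W : Set Y, IsOpen W ∧ y ∈ W ∧ W ⊆ O ∧
        oscOnWithin (A ∪ B) φt ((A ∪ B) ∩ f ⁻¹' W) < ε := by
      intro ε hε
      refine ⟨O, hO, hy, subset_rfl, lt_of_le_of_lt (b := 0) ?_ hε⟩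
      refine oscOnWithin_le le_rfl fun x hx => ?_
      rcases hx.1 with hxA | hxB
      · have hxnCB : x ∉ CB := by
          intro hc
          have hxB : x ∈ B := by rw [hCBe]; exact ⟨hc, hx.2⟩
          exact (Set.eq_empty_iff_forall_notMem.1 hAB x) ⟨hxA, hxB⟩
        refine oscWithin_le_of_witness le_rfl hCBc.isOpen_compl hxnCB ?_
        rintro z ⟨hzc, hzF⟩
        have hzB : z ∉ B := by
          intro hzB'
          exact hzc (by rw [hCBe] at hzB'; exact hzB'.1)
        rw [hφtA x hxA, hφtdef]
        simp [hzB]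
      · have hxnCA : x ∉ CA := by
          intro hc
          have hxA : x ∈ A := by rw [hCAe]; exact ⟨hc, hx.2⟩
          exact (Set.eq_empty_iff_forall_notMem.1 hAB x) ⟨hxA, hxB⟩
        refine oscWithin_le_of_witness le_rfl hCAc.isOpen_compl hxnCA ?_
        rintro z ⟨hzc, hzF⟩
        have hzB : z ∈ B := by
          rcases hzF with hzA | hzB'
          · exact absurd (by rw [hCAe] at hzA; exact hzA.1) hzc
          · exact hzB'
        rw [hφtB x hxB, hφtB z hzB]
        simp
    obtain ⟨φ, ⟨Cφ, hCφ⟩, hφc, -, -, happrox⟩ :=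
      hExt O hO (A ∪ B) hFne hFcl y hy φt hbd hcont
    obtain ⟨O₁, hO₁o, hyO₁, hO₁O, hsup⟩ := happrox (1 / 8) (by norm_num)
    have hptw : ∀ x ∈ (A ∪ B) ∩ f ⁻¹' O₁, |φt x - φ x| < 1 / 8 := by
      intro x hx
      refine lt_of_le_of_lt ?_ hsup
      refine le_csSup ⟨1 + Cφ, ?_⟩ (Set.mem_image_of_mem _ hx)
      rintro v ⟨z, hz, rfl⟩
      have h1 : |φt z| ≤ 1 := by rcases hφt01 z with h | h <;> rw [h] <;> norm_num
      calc |φt z - φ z| ≤ |φt z| + |φ z| := abs_sub _ _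
        _ ≤ 1 + Cφ := add_le_add h1 (hCφ z)
    obtain ⟨O₂, hO₂o, hyO₂, hpt2⟩ := hφc.extract hCφ (show (0:ℝ) < 1 / 8 by norm_num)
    set W : Set Y := O₁ ∩ O₂ with hWdef
    have hWo : IsOpen W := hO₁o.inter hO₂o
    have hyW : y ∈ W := ⟨hyO₁, hyO₂⟩
    have hWO : W ⊆ O := fun z hz => hO₁O hz.1
    have hGx : ∀ x : X, ∃ G : Set X, x ∈ f ⁻¹' O₂ →
        IsOpen G ∧ x ∈ G ∧ ∀ z ∈ G, |φ x - φ z| < 1 / 8 := by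
      intro x
      by_cases hx : x ∈ f ⁻¹' O₂
      · obtain ⟨G, hGo, hxG, hG⟩ := hpt2 x hx
        exact ⟨G, fun _ => ⟨hGo, hxG, hG⟩⟩
      · exact ⟨∅, fun h => absurd h hx⟩
    choose Gx hGx using hGx
    refine ⟨W, hWo, hyW, hWO, (⋃ x ∈ A ∩ f ⁻¹' W, Gx x) ∩ f ⁻¹' W,
      (⋃ x ∈ B ∩ f ⁻¹' W, Gx x) ∩ f ⁻¹' W,
      ⟨⋃ x ∈ A ∩ f ⁻¹' W, Gx x,
        isOpen_biUnion fun x hx => (hGx x hx.2.2).1, rfl⟩,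
      ⟨⋃ x ∈ B ∩ f ⁻¹' W, Gx x,
        isOpen_biUnion fun x hx => (hGx x hx.2.2).1, rfl⟩, ?_, ?_, ?_⟩
    · intro x hx
      exact ⟨Set.mem_biUnion hx (hGx x hx.2.2).2.1, hx.2⟩
    · intro x hx
      exact ⟨Set.mem_biUnion hx (hGx x hx.2.2).2.1, hx.2⟩
    · rw [Set.eq_empty_iff_forall_notMem]
      rintro z ⟨⟨hzU, hzW⟩, hzV, -⟩
      obtain ⟨x1, hx1, hzG1⟩ := Set.mem_iUnion₂.1 hzU
      obtain ⟨x2, hx2, hzG2⟩ := Set.mem_iUnion₂.1 hzV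
      have h1 := (hGx x1 hx1.2.2).2.2 z hzG1
      have h2 := (hGx x2 hx2.2.2).2.2 z hzG2
      have h3 : |φt x1 - φ x1| < 1 / 8 := hptw x1 ⟨Or.inl hx1.1, hx1.2.1⟩
      have h4 : |φt x2 - φ x2| < 1 / 8 := hptw x2 ⟨Or.inr hx2.1, hx2.2.1⟩
      rw [hφtA x1 hx1.1] at h3
      rw [hφtB x2 hx2.1] at h4
      have e1 := abs_lt.1 h1
      have e2 := abs_lt.1 h2
      have e3 := abs_lt.1 h3
      have e4 := abs_lt.1 h4
      linarith

end Backward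

/-- Theorem 3.4, (A) ⇔ (D); Brouwer–Tietze–Urysohn extension theorem for
mappings: `f` is normal iff every bounded function on a nonempty closed (in `f⁻¹ O`) set `F`
which is continuous at `y` for the restriction of `f` to `F` (with target `O`) extends to a
bounded `f`-continuous at `y` function on `X` satisfying (a)–(c). -/
theorem normalMap_iff_extension {X Y : Type*} [TopologicalSpace X] [TopologicalSpace Y]
    (f : X → Y) (hf : Continuous f) :
    NormalMap f ↔
      ∀ O : Set Y, IsOpen O → ∀ F : Set X, F.Nonempty → ClosedIn (f ⁻¹' O) F →
        ∀ y ∈ O, ∀ φt : X → ℝ,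
          (∃ C : ℝ, ∀ x ∈ F, |φt x| ≤ C) →
          (∀ ε > (0 : ℝ), ∃ W : Set Y, IsOpen W ∧ y ∈ W ∧ W ⊆ O ∧
            oscOnWithin F φt (F ∩ f ⁻¹' W) < ε) →
          ∃ φ : X → ℝ, (∃ C : ℝ, ∀ x, |φ x| ≤ C) ∧ FContinuousAt f φ y ∧
            (∃ G : Set Y, y ∈ G ∧ G ⊆ O ∧
              (∃ W : ℕ → Set Y, (∀ n, IsOpen (W n) ∧ W n ⊆ O) ∧ G = ⋂ n, W n) ∧
              ∀ x ∈ F ∩ f ⁻¹' G, φt x = φ x) ∧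
            sSup ((fun x => |φ x|) '' (Set.univ : Set X)) ≤ sSup ((fun x => |φt x|) '' F) ∧
            ∀ ε > (0 : ℝ), ∃ Oε : Set Y, IsOpen Oε ∧ y ∈ Oε ∧ Oε ⊆ O ∧
              sSup ((fun x => |φt x - φ x|) '' (F ∩ f ⁻¹' Oε)) < ε := by
  constructor
  · intro hN O hO F hFne hFcl y hy φt hbd hcont
    exact extension hN hf hO hFne hFcl hy φt hbd hcont
  · exact backward_direction hf
end

section
/- A continuous map f : X → Y is σ-normal if and only if for every open O ⊆ Y, every point y ∈ O, every F_σ-subset T = ⋃_{l∈ℕ} T_l of f⁻¹(O) with each T_l closed in the subspace f⁻¹(O), and every open U ⊆ f⁻¹(O) with T ⊆ U, there exist an open neighborhood Oy ⊆ O of y and open subsets V_l of the subspace f⁻¹(Oy) such that T_l ∩ f⁻¹(Oy) ⊆ V_l ⊆ cl_{f⁻¹(Oy)}(V_l) ⊆ U ∩ f⁻¹(Oy) for all l ∈ ℕ. -/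
/- Definitions from fiberwise general topology (Liseev, "Functional approach
to the normality of mappings"). -/

variable {X Y : Type*} [TopologicalSpace X] [TopologicalSpace Y]

/-- Lemma 4.4: `f` is σ-normal iff the "small Urysohn lemma" for countable
families of closed sets holds. -/
theorem sigmaNormalMap_iff_smallUrysohn {X Y : Type*} [TopologicalSpace X] [TopologicalSpace Y]
    (f : X → Y) (hf : Continuous f) :
    SigmaNormalMap f ↔
      ∀ O : Set Y, IsOpen O → ∀ y ∈ O, ∀ T : ℕ → Set X,
        (∀ l, ClosedIn (f ⁻¹' O) (T l)) →
        ∀ U : Set X, OpenIn (f ⁻¹' O) U → (⋃ l, T l) ⊆ U →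
          ∃ Oy : Set Y, IsOpen Oy ∧ y ∈ Oy ∧ Oy ⊆ O ∧
            ∃ V : ℕ → Set X, ∀ l, OpenIn (f ⁻¹' Oy) (V l) ∧
              T l ∩ f ⁻¹' Oy ⊆ V l ∧ clIn (f ⁻¹' Oy) (V l) ⊆ U ∩ f ⁻¹' Oy := by
  constructor
  · intro h O hO y hy T hT U hU hTU
    obtain ⟨G, hG, rfl⟩ := hU
    have hF : ClosedIn (f ⁻¹' O) (f ⁻¹' O \ (G ∩ f ⁻¹' O)) :=
      ⟨Gᶜ, hG.isClosed_compl, by ext x; simp [and_comm]⟩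
    obtain ⟨W, hWopen, hyW, hWO, V, hVopen, hTV, hVF⟩ :=
      h O hO T hT _ hF (by
        rw [Set.eq_empty_iff_forall_notMem]
        rintro x ⟨hx1, hx2, hx3⟩
        exact hx3 (hTU hx1)) y hy
    refine ⟨W, hWopen, hyW, hWO, V, fun l => ⟨hVopen l, hTV l, ?_⟩⟩
    intro x hx
    have hxW : x ∈ f ⁻¹' W := hx.2
    have hxO : x ∈ f ⁻¹' O := hWO hxW
    have : x ∉ f ⁻¹' O \ (G ∩ f ⁻¹' O) := by
      intro hxF
      have : x ∈ (⋃ l, clIn (f ⁻¹' W) (V l)) ∩ (f ⁻¹' O \ (G ∩ f ⁻¹' O)) :=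
        ⟨Set.mem_iUnion.2 ⟨l, hx⟩, hxF⟩
      rw [hVF] at this; exact this
    refine ⟨?_, hxW⟩
    by_contra hxG
    exact this ⟨hxO, fun hg => hxG hg⟩
  · intro h O hO T hT F hF hTF y hy
    obtain ⟨C, hC, rfl⟩ := hF
    have hU : OpenIn (f ⁻¹' O) (Cᶜ ∩ f ⁻¹' O) := ⟨Cᶜ, hC.isOpen_compl, rfl⟩
    have hTU : (⋃ l, T l) ⊆ Cᶜ ∩ f ⁻¹' O := by
      intro x hx
      obtain ⟨l, hl⟩ := Set.mem_iUnion.1 hx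
      obtain ⟨D, hD, hTl⟩ := hT l
      have hxO : x ∈ f ⁻¹' O := by rw [hTl] at hl; exact hl.2
      refine ⟨fun hxC => ?_, hxO⟩
      have : x ∈ (⋃ l, T l) ∩ (C ∩ f ⁻¹' O) := ⟨hx, hxC, hxO⟩
      rw [hTF] at this; exact this
    obtain ⟨Oy, hOyopen, hyOy, hOyO, V, hV⟩ := h O hO y hy T hT _ hU hTU
    refine ⟨Oy, hOyopen, hyOy, hOyO, V, fun l => (hV l).1, fun l => (hV l).2.1, ?_⟩
    rw [Set.eq_empty_iff_forall_notMem]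
    rintro x ⟨hx1, hx2⟩
    obtain ⟨l, hl⟩ := Set.mem_iUnion.1 hx1
    exact ((hV l).2.2 hl).1.1 hx2.1
end

section
/- If f : X → Y is a perfectly normal mapping, then for every subset X₀ ⊆ X the submapping f|_{X₀} : X₀ → Y (the restriction of f to the subspace X₀) is perfectly normal. -/
/- Definitions from fiberwise general topology (Liseev, "Functional approach
to the normality of mappings"). -/

variable {X Y : Type*} [TopologicalSpace X] [TopologicalSpace Y]

section OscAux

variable {X : Type*} [TopologicalSpace X] {φ : X → ℝ}

omit [TopologicalSpace X] in
lemma osc_abs_le_one (hb : ∀ x, φ x ∈ Set.Icc (0:ℝ) 1) (a b : X) : |φ a - φ b| ≤ 1 := by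
  rw [abs_le]
  have h1 := hb a; have h2 := hb b
  constructor <;> [linarith [h1.1, h1.2, h2.1, h2.2]; linarith [h1.1, h1.2, h2.1, h2.2]]

omit [TopologicalSpace X] in
lemma osc_bddAbove_img (hb : ∀ x, φ x ∈ Set.Icc (0:ℝ) 1) (x : X) (S : Set X) :
    BddAbove ((fun z => |φ x - φ z|) '' S) := by
  refine ⟨1, ?_⟩
  rintro r ⟨z, _, rfl⟩
  exact osc_abs_le_one hb x z

lemma osc_set_nonneg (hb : ∀ x, φ x ∈ Set.Icc (0:ℝ) 1) (x : X) {r : ℝ}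
    (hr : r ∈ {r : ℝ | ∃ G : Set X, IsOpen G ∧ x ∈ G ∧
      r = sSup ((fun z => |φ x - φ z|) '' (G ∩ Set.univ))}) : 0 ≤ r := by
  obtain ⟨G, _, hxG, rfl⟩ := hr
  have hmem : (fun z => |φ x - φ z|) x ∈ (fun z => |φ x - φ z|) '' (G ∩ Set.univ) :=
    ⟨x, ⟨hxG, trivial⟩, rfl⟩
  have := le_csSup (osc_bddAbove_img hb x _) hmem
  simpa using this

lemma oscWithin_nonneg_s12 (hb : ∀ x, φ x ∈ Set.Icc (0:ℝ) 1) (x : X) :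
    0 ≤ oscWithin Set.univ φ x := by
  unfold oscWithin
  exact le_csInf ⟨_, Set.univ, isOpen_univ, trivial, rfl⟩
    (fun r hr => osc_set_nonneg hb x hr)

lemma oscWithin_le_one (hb : ∀ x, φ x ∈ Set.Icc (0:ℝ) 1) (x : X) :
    oscWithin Set.univ φ x ≤ 1 := by
  have hmem : sSup ((fun z => |φ x - φ z|) '' (Set.univ ∩ Set.univ)) ∈
      {r : ℝ | ∃ G : Set X, IsOpen G ∧ x ∈ G ∧
        r = sSup ((fun z => |φ x - φ z|) '' (G ∩ Set.univ))} :=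
    ⟨Set.univ, isOpen_univ, trivial, rfl⟩
  have h1 : oscWithin Set.univ φ x ≤ sSup ((fun z => |φ x - φ z|) '' (Set.univ ∩ Set.univ)) :=
    csInf_le ⟨0, fun r hr => osc_set_nonneg hb x hr⟩ hmem
  refine h1.trans (Real.sSup_le ?_ zero_le_one)
  rintro r ⟨z, _, rfl⟩
  exact osc_abs_le_one hb x z

lemma oscWithin_val_le {X₀ : Set X} (hb : ∀ x, φ x ∈ Set.Icc (0:ℝ) 1) (x : X₀) :
    oscWithin Set.univ (fun z : X₀ => φ z) x ≤ oscWithin Set.univ φ (x : X) := by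
  have hb' : ∀ z : X₀, (fun z : X₀ => φ z) z ∈ Set.Icc (0:ℝ) 1 := fun z => hb z
  conv_rhs => rw [oscWithin]
  refine le_csInf ⟨_, Set.univ, isOpen_univ, trivial, rfl⟩ ?_
  rintro r ⟨G, hG, hxG, rfl⟩
  have hmem : sSup ((fun z : X₀ => |φ x - φ z|) '' ((Subtype.val ⁻¹' G) ∩ Set.univ)) ∈
      {r : ℝ | ∃ G' : Set X₀, IsOpen G' ∧ x ∈ G' ∧
        r = sSup ((fun z : X₀ => |(fun z : X₀ => φ z) x - (fun z : X₀ => φ z) z|) '' (G' ∩ Set.univ))} :=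
    ⟨Subtype.val ⁻¹' G, hG.preimage continuous_subtype_val, hxG, rfl⟩
  have h1 : oscWithin Set.univ (fun z : X₀ => φ z) x ≤
      sSup ((fun z : X₀ => |φ x - φ z|) '' ((Subtype.val ⁻¹' G) ∩ Set.univ)) :=
    csInf_le ⟨0, fun r hr => osc_set_nonneg hb' x hr⟩ hmem
  refine h1.trans (csSup_le_csSup (osc_bddAbove_img hb _ _) ?_ ?_)
  · exact ⟨|φ x - φ x|, x, ⟨hxG, trivial⟩, rfl⟩
  · rintro r ⟨z, ⟨hz, _⟩, rfl⟩
    exact ⟨z.val, ⟨hz, trivial⟩, rfl⟩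

lemma oscOn_val_le {Y : Type*} [TopologicalSpace Y] {X₀ : Set X} (f : X → Y)
    (hb : ∀ x, φ x ∈ Set.Icc (0:ℝ) 1) (W : Set Y) :
    oscOn (fun z : X₀ => φ z) ((fun x : X₀ => f ↑x) ⁻¹' W) ≤
      max 0 (oscOn φ (f ⁻¹' W)) := by
  rcases Set.eq_empty_or_nonempty ((fun x : X₀ => f ↑x) ⁻¹' W) with hA | ⟨z0, hz0⟩
  · rw [oscOn, oscOnWithin, hA, Set.image_empty, Real.sSup_empty]
    exact le_max_left 0 _
  · have hbdd : BddAbove (oscWithin Set.univ φ '' (f ⁻¹' W)) :=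
      ⟨1, by rintro r ⟨w, _, rfl⟩; exact oscWithin_le_one hb w⟩
    have hge : (0:ℝ) ≤ oscOn φ (f ⁻¹' W) := by
      have h0 : oscWithin Set.univ φ (z0 : X) ∈ oscWithin Set.univ φ '' (f ⁻¹' W) :=
        ⟨z0, hz0, rfl⟩
      exact (oscWithin_nonneg_s12 hb _).trans (le_csSup hbdd h0)
    rw [max_eq_right hge, oscOn, oscOnWithin]
    refine Real.sSup_le ?_ hge
    rintro r ⟨z, hz, rfl⟩
    exact (oscWithin_val_le hb z).trans (le_csSup hbdd ⟨z.val, hz, rfl⟩)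

end OscAux

/-- Proposition 5.3: any submapping of a perfectly normal mapping is
perfectly normal. -/
theorem perfectlyNormalMap_submap {X Y : Type*} [TopologicalSpace X] [TopologicalSpace Y]
    (f : X → Y) (hf : Continuous f) (h : PerfectlyNormalMap f) (X₀ : Set X) :
    PerfectlyNormalMap (fun x : X₀ => f ↑x) := by
  intro O hO y
  obtain ⟨G, hG, hGO⟩ := isOpen_induced_iff.mp hO
  obtain ⟨Oy, hOy, hyOy, φ, hφb, hφeq, hcover, hzero⟩ := h G hG y
  refine ⟨Oy, hOy, hyOy, fun l => fun z : X₀ => φ l z, fun l z => hφb l z, ?_, ?_, ?_⟩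
  · intro ε hε
    obtain ⟨W, hW, hyW, hn⟩ := hφeq ε hε
    refine ⟨W, hW, hyW, fun n => ?_⟩
    calc oscOn (fun z : X₀ => φ n z) ((fun x : X₀ => f ↑x) ⁻¹' W)
        ≤ max 0 (oscOn (φ n) (f ⁻¹' W)) := oscOn_val_le f (hφb n) W
      _ < ε := max_lt hε (hn n)
  · subst hGO
    ext z
    have hz := Set.ext_iff.mp hcover z.val
    simp only [Set.mem_inter_iff, Set.mem_preimage, Set.mem_iUnion,
      Set.mem_singleton_iff] at hz ⊢
    tauto
  · intro l z hz
    have h1 : (z : X) ∈ f ⁻¹' Oy \ G := by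
      refine ⟨hz.1, fun hzG => hz.2 ?_⟩
      rw [← hGO]; exact hzG
    have h2 := hzero l h1
    exact ⟨h2.1, h2.2⟩
end

section
/- Every perfectly normal mapping f : X → Y is prenormal. -/
/- Definitions from fiberwise general topology (Liseev, "Functional approach
to the normality of mappings"). -/

variable {X Y : Type*} [TopologicalSpace X] [TopologicalSpace Y]

section Aux

variable {X : Type*} [TopologicalSpace X]

private lemma abs_sub_le_one {φ : X → ℝ} (hφ : ∀ x, φ x ∈ Set.Icc (0 : ℝ) 1) (x z : X) :
    |φ x - φ z| ≤ 1 := by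
  have h1 := hφ x; have h2 := hφ z
  simp only [Set.mem_Icc] at h1 h2
  rw [abs_le]; constructor <;> linarith [h1.1, h1.2, h2.1, h2.2]

private lemma exists_nhd_of_osc_lt {φ : X → ℝ} (hφ : ∀ x, φ x ∈ Set.Icc (0 : ℝ) 1)
    {x : X} {ε : ℝ} (h : osc φ x < ε) :
    ∃ G : Set X, IsOpen G ∧ x ∈ G ∧ ∀ z ∈ G, |φ x - φ z| < ε := by
  set s := {r : ℝ | ∃ G : Set X, IsOpen G ∧ x ∈ G ∧
      r = sSup ((fun z => |φ x - φ z|) '' (G ∩ Set.univ))} with hs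
  have hbddim : ∀ G : Set X, BddAbove ((fun z => |φ x - φ z|) '' (G ∩ Set.univ)) := by
    intro G
    refine ⟨1, ?_⟩
    rintro r ⟨w, _, rfl⟩
    exact abs_sub_le_one hφ x w
  have hbdd : BddBelow s := by
    refine ⟨0, ?_⟩
    rintro r ⟨G, hG, hxG, rfl⟩
    have h0 : |φ x - φ x| ∈ (fun z => |φ x - φ z|) '' (G ∩ Set.univ) :=
      ⟨x, ⟨hxG, Set.mem_univ x⟩, rfl⟩
    have := le_csSup (hbddim G) h0
    simpa using this
  have hne : s.Nonempty := ⟨_, Set.univ, isOpen_univ, Set.mem_univ x, rfl⟩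
  have h' : sInf s < ε := h
  obtain ⟨r, hr, hrε⟩ := (csInf_lt_iff hbdd hne).mp h'
  obtain ⟨G, hG, hxG, rfl⟩ := hr
  refine ⟨G, hG, hxG, fun z hz => ?_⟩
  exact lt_of_le_of_lt (le_csSup (hbddim G) ⟨z, ⟨hz, Set.mem_univ z⟩, rfl⟩) hrε

private lemma osc_le_one {φ : X → ℝ} (hφ : ∀ x, φ x ∈ Set.Icc (0 : ℝ) 1) (x : X) :
    osc φ x ≤ 1 := by
  have hbdd : BddBelow {r : ℝ | ∃ G : Set X, IsOpen G ∧ x ∈ G ∧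
      r = sSup ((fun z => |φ x - φ z|) '' (G ∩ Set.univ))} := by
    refine ⟨0, ?_⟩
    rintro r ⟨G, hG, hxG, rfl⟩
    have h0 : |φ x - φ x| ∈ (fun z => |φ x - φ z|) '' (G ∩ Set.univ) :=
      ⟨x, ⟨hxG, Set.mem_univ x⟩, rfl⟩
    have hb : BddAbove ((fun z => |φ x - φ z|) '' (G ∩ Set.univ)) := by
      refine ⟨1, ?_⟩; rintro r ⟨w, _, rfl⟩; exact abs_sub_le_one hφ x w
    have := le_csSup hb h0
    simpa using this
  have hmem : sSup ((fun z => |φ x - φ z|) '' (Set.univ ∩ Set.univ)) ∈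
      {r : ℝ | ∃ G : Set X, IsOpen G ∧ x ∈ G ∧
        r = sSup ((fun z => |φ x - φ z|) '' (G ∩ Set.univ))} :=
    ⟨Set.univ, isOpen_univ, Set.mem_univ x, rfl⟩
  have h1 : sSup ((fun z => |φ x - φ z|) '' (Set.univ ∩ Set.univ)) ≤ 1 := by
    refine csSup_le ⟨|φ x - φ x|, ⟨x, ⟨Set.mem_univ x, Set.mem_univ x⟩, rfl⟩⟩ ?_
    rintro r ⟨w, _, rfl⟩
    exact abs_sub_le_one hφ x w
  exact le_trans (csInf_le hbdd hmem) h1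

private lemma osc_lt_of_oscOn_lt {φ : X → ℝ} (hφ : ∀ x, φ x ∈ Set.Icc (0 : ℝ) 1)
    {A : Set X} {x : X} (hx : x ∈ A) {ε : ℝ} (h : oscOn φ A < ε) : osc φ x < ε := by
  have hb : BddAbove (osc φ '' A) := by
    refine ⟨1, ?_⟩; rintro r ⟨w, _, rfl⟩; exact osc_le_one hφ w
  exact lt_of_le_of_lt (le_csSup hb ⟨x, hx, rfl⟩) h

end Aux

/-- Proposition 5.4: every perfectly normal mapping is prenormal. -/
theorem perfectlyNormalMap_prenormal {X Y : Type*} [TopologicalSpace X] [TopologicalSpace Y]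
    (f : X → Y) (hf : Continuous f) (h : PerfectlyNormalMap f) :
    PrenormalMap f := by
  intro A B hA hB hAB y
  obtain ⟨O₁, hO₁o, hyO₁, φ, hφmem, hφeq, hφ1, hφ0⟩ := h Bᶜ hB.isOpen_compl y
  obtain ⟨O₂, hO₂o, hyO₂, ψ, hψmem, hψeq, hψ1, hψ0⟩ := h Aᶜ hA.isOpen_compl y
  obtain ⟨O₃, hO₃o, hyO₃, hφosc⟩ := hφeq (1/3) (by norm_num)
  obtain ⟨O₄, hO₄o, hyO₄, hψosc⟩ := hψeq (1/3) (by norm_num)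
  refine ⟨O₁ ∩ O₂ ∩ O₃ ∩ O₄,
    ((hO₁o.inter hO₂o).inter hO₃o).inter hO₄o, ⟨⟨⟨hyO₁, hyO₂⟩, hyO₃⟩, hyO₄⟩, ?_⟩
  set W : Set Y := O₁ ∩ O₂ ∩ O₃ ∩ O₄ with hW
  set S : Set X := f ⁻¹' W with hS
  -- "stable" superlevel sets
  set G : ℕ → Set X := fun l => {x | ∃ g : Set X, IsOpen g ∧ x ∈ g ∧ ∀ z ∈ g, 2/3 < φ l z}
    with hGdef
  set H : ℕ → Set X := fun l => {x | ∃ g : Set X, IsOpen g ∧ x ∈ g ∧ ∀ z ∈ g, 2/3 < ψ l z}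
    with hHdef
  have hGopen : ∀ l, IsOpen (G l) := by
    intro l
    rw [isOpen_iff_forall_mem_open]
    rintro x ⟨g, hg, hxg, hgt⟩
    exact ⟨g, fun z hz => ⟨g, hg, hz, hgt⟩, hg, hxg⟩
  have hHopen : ∀ l, IsOpen (H l) := by
    intro l
    rw [isOpen_iff_forall_mem_open]
    rintro x ⟨g, hg, hxg, hgt⟩
    exact ⟨g, fun z hz => ⟨g, hg, hz, hgt⟩, hg, hxg⟩
  have hGval : ∀ l, ∀ z ∈ G l, 2/3 < φ l z := by
    rintro l z ⟨g, hg, hzg, hgt⟩; exact hgt z hzg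
  have hHval : ∀ l, ∀ z ∈ H l, 2/3 < ψ l z := by
    rintro l z ⟨g, hg, hzg, hgt⟩; exact hgt z hzg
  have hSsub : ∀ x ∈ S, x ∈ f ⁻¹' O₁ ∧ x ∈ f ⁻¹' O₂ ∧ x ∈ f ⁻¹' O₃ ∧ x ∈ f ⁻¹' O₄ := by
    intro x hx
    exact ⟨hx.1.1.1, hx.1.1.2, hx.1.2, hx.2⟩
  -- points of B in S are not in closures of the G l
  have hGB : ∀ l, ∀ x ∈ B ∩ S, x ∉ closure (G l) := by
    rintro l x ⟨hxB, hxS⟩ hxcl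
    obtain ⟨hxO₁, _, hxO₃, _⟩ := hSsub x hxS
    have hx0 : φ l x = 0 := by
      have := hφ0 l ⟨hxO₁, by simpa using hxB⟩
      simpa using this.1
    have hosc : osc (φ l) x < 1/3 :=
      osc_lt_of_oscOn_lt (hφmem l) hxO₃ (hφosc l)
    obtain ⟨g, hg, hxg, hgt⟩ := exists_nhd_of_osc_lt (hφmem l) hosc
    obtain ⟨z, hzg, hzG⟩ := (mem_closure_iff.mp hxcl) g hg hxg
    have h1 := hgt z hzg
    have h2 := hGval l z hzG
    rw [hx0] at h1
    rw [abs_sub_comm, abs_of_nonneg (by linarith)] at h1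
    linarith
  -- points of A in S are not in closures of the H l
  have hHA : ∀ l, ∀ x ∈ A ∩ S, x ∉ closure (H l) := by
    rintro l x ⟨hxA, hxS⟩ hxcl
    obtain ⟨_, hxO₂, _, hxO₄⟩ := hSsub x hxS
    have hx0 : ψ l x = 0 := by
      have := hψ0 l ⟨hxO₂, by simpa using hxA⟩
      simpa using this.1
    have hosc : osc (ψ l) x < 1/3 :=
      osc_lt_of_oscOn_lt (hψmem l) hxO₄ (hψosc l)
    obtain ⟨g, hg, hxg, hgt⟩ := exists_nhd_of_osc_lt (hψmem l) hosc
    obtain ⟨z, hzg, hzH⟩ := (mem_closure_iff.mp hxcl) g hg hxg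
    have h1 := hgt z hzg
    have h2 := hHval l z hzH
    rw [hx0] at h1
    rw [abs_sub_comm, abs_of_nonneg (by linarith)] at h1
    linarith
  -- A ∩ S is covered by the G l
  have hAcov : ∀ x ∈ A ∩ S, ∃ l, x ∈ G l := by
    rintro x ⟨hxA, hxS⟩
    obtain ⟨hxO₁, _, hxO₃, _⟩ := hSsub x hxS
    have hxBc : x ∈ Bᶜ := by
      intro hxB
      have : x ∈ A ∩ B := ⟨hxA, hxB⟩
      rw [hAB] at this
      exact this
    have hx1 : x ∈ ⋃ l, φ l ⁻¹' {1} ∩ f ⁻¹' O₁ := by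
      rw [← hφ1]; exact ⟨hxBc, hxO₁⟩
    obtain ⟨l, hl1, _⟩ := Set.mem_iUnion.mp hx1
    have hx1' : φ l x = 1 := hl1
    have hosc : osc (φ l) x < 1/3 :=
      osc_lt_of_oscOn_lt (hφmem l) hxO₃ (hφosc l)
    obtain ⟨g, hg, hxg, hgt⟩ := exists_nhd_of_osc_lt (hφmem l) hosc
    refine ⟨l, g, hg, hxg, fun z hz => ?_⟩
    have := hgt z hz
    rw [hx1'] at this
    have := abs_lt.mp this
    linarith [this.1, this.2]
  -- B ∩ S is covered by the H l
  have hBcov : ∀ x ∈ B ∩ S, ∃ l, x ∈ H l := by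
    rintro x ⟨hxB, hxS⟩
    obtain ⟨_, hxO₂, _, hxO₄⟩ := hSsub x hxS
    have hxAc : x ∈ Aᶜ := by
      intro hxA
      have : x ∈ A ∩ B := ⟨hxA, hxB⟩
      rw [hAB] at this
      exact this
    have hx1 : x ∈ ⋃ l, ψ l ⁻¹' {1} ∩ f ⁻¹' O₂ := by
      rw [← hψ1]; exact ⟨hxAc, hxO₂⟩
    obtain ⟨l, hl1, _⟩ := Set.mem_iUnion.mp hx1
    have hx1' : ψ l x = 1 := hl1
    have hosc : osc (ψ l) x < 1/3 :=
      osc_lt_of_oscOn_lt (hψmem l) hxO₄ (hψosc l)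
    obtain ⟨g, hg, hxg, hgt⟩ := exists_nhd_of_osc_lt (hψmem l) hosc
    refine ⟨l, g, hg, hxg, fun z hz => ?_⟩
    have := hgt z hz
    rw [hx1'] at this
    have := abs_lt.mp this
    linarith [this.1, this.2]
  -- the shrinking trick
  set U' : ℕ → Set X := fun l => G l \ ⋃ k ∈ Finset.range (l + 1), closure (H k) with hU'
  set V' : ℕ → Set X := fun l => H l \ ⋃ k ∈ Finset.range (l + 1), closure (G k) with hV'
  have hU'open : IsOpen (⋃ l, U' l) := by
    apply isOpen_iUnion
    intro l
    exact (hGopen l).sdiff (Set.Finite.isClosed_biUnion (Finset.range (l + 1)).finite_toSet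
      (fun k _ => isClosed_closure))
  have hV'open : IsOpen (⋃ l, V' l) := by
    apply isOpen_iUnion
    intro l
    exact (hHopen l).sdiff (Set.Finite.isClosed_biUnion (Finset.range (l + 1)).finite_toSet
      (fun k _ => isClosed_closure))
  refine ⟨(⋃ l, U' l) ∩ S, (⋃ l, V' l) ∩ S, ⟨⋃ l, U' l, hU'open, rfl⟩,
    ⟨⋃ l, V' l, hV'open, rfl⟩, ?_, ?_, ?_⟩
  · rintro x hx
    obtain ⟨l, hl⟩ := hAcov x hx
    refine ⟨Set.mem_iUnion.mpr ⟨l, hl, ?_⟩, hx.2⟩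
    simp only [Set.mem_iUnion]
    rintro ⟨k, _, hk⟩
    exact hHA k x hx hk
  · rintro x hx
    obtain ⟨l, hl⟩ := hBcov x hx
    refine ⟨Set.mem_iUnion.mpr ⟨l, hl, ?_⟩, hx.2⟩
    simp only [Set.mem_iUnion]
    rintro ⟨k, _, hk⟩
    exact hGB k x hx hk
  · ext x
    simp only [Set.mem_inter_iff, Set.mem_iUnion, Set.mem_empty_iff_false, iff_false]
    rintro ⟨⟨⟨l, hl⟩, _⟩, ⟨m, hm⟩, _⟩
    rcases le_total l m with hlm | hml
    · refine hm.2 (Set.mem_iUnion.mpr ⟨l, ?_⟩)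
      simp only [Set.mem_iUnion]
      exact ⟨Finset.mem_range.mpr (by omega), subset_closure hl.1⟩
    · refine hl.2 (Set.mem_iUnion.mpr ⟨m, ?_⟩)
      simp only [Set.mem_iUnion]
      exact ⟨Finset.mem_range.mpr (by omega), subset_closure hm.1⟩
end

section
/- Let f : X → Y be a perfectly normal mapping. Then every open submapping f|_O : O → Y (O open in X) is f-functionally open, and every closed submapping f|_F : F → Y (F closed in X) is f-functionally closed. -/
/- Definitions from fiberwise general topology (Liseev, "Functional approach
to the normality of mappings"). -/

variable {X Y : Type*} [TopologicalSpace X] [TopologicalSpace Y]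

section Aux

open Set

private lemma aux_abs_sub_le_one {a b : ℝ} (ha : a ∈ Set.Icc (0:ℝ) 1)
    (hb : b ∈ Set.Icc (0:ℝ) 1) : |a - b| ≤ 1 := by
  rw [abs_sub_le_iff]
  obtain ⟨ha0, ha1⟩ := ha; obtain ⟨hb0, hb1⟩ := hb
  constructor <;> linarith

private lemma aux_osc_le_of_nhds {φ : X → ℝ} {x : X} {c : ℝ} (hc : 0 ≤ c)
    (h : ∃ G : Set X, IsOpen G ∧ x ∈ G ∧ ∀ z ∈ G, |φ x - φ z| ≤ c) : osc φ x ≤ c := by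
  obtain ⟨G, hGo, hxG, hGc⟩ := h
  refine csInf_le_of_le ?_ ⟨G, hGo, hxG, rfl⟩ ?_
  · refine ⟨0, ?_⟩
    rintro r ⟨G', hG', hx', rfl⟩
    refine Real.sSup_nonneg ?_
    rintro r ⟨z, hz, rfl⟩; exact abs_nonneg _
  · refine Real.sSup_le ?_ hc
    rintro r ⟨z, hz, rfl⟩; exact hGc z hz.1

private lemma aux_exists_nhds_of_osc_lt {φ : X → ℝ} (hb : ∀ x, φ x ∈ Set.Icc (0:ℝ) 1)
    {x : X} {ε : ℝ} (h : osc φ x < ε) :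
    ∃ G : Set X, IsOpen G ∧ x ∈ G ∧ ∀ z ∈ G, |φ x - φ z| < ε := by
  rw [osc, oscWithin] at h
  have hne : {r : ℝ | ∃ G : Set X, IsOpen G ∧ x ∈ G ∧
      r = sSup ((fun z => |φ x - φ z|) '' (G ∩ Set.univ))}.Nonempty :=
    ⟨_, ⟨univ, isOpen_univ, mem_univ x, rfl⟩⟩
  obtain ⟨r, hrS, hrε⟩ := exists_lt_of_csInf_lt hne h
  obtain ⟨G, hGo, hxG, rfl⟩ := hrS
  refine ⟨G, hGo, hxG, fun z hz => lt_of_le_of_lt ?_ hrε⟩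
  refine le_csSup ⟨1, ?_⟩ ⟨z, ⟨hz, mem_univ z⟩, rfl⟩
  rintro r ⟨w, hw, rfl⟩; exact aux_abs_sub_le_one (hb x) (hb w)

private lemma aux_osc_le_one {φ : X → ℝ} (hb : ∀ x, φ x ∈ Set.Icc (0:ℝ) 1) (x : X) :
    osc φ x ≤ 1 :=
  aux_osc_le_of_nhds zero_le_one ⟨univ, isOpen_univ, mem_univ x,
    fun z _ => aux_abs_sub_le_one (hb x) (hb z)⟩

private lemma aux_oscOn_le {φ : X → ℝ} {A : Set X} {c : ℝ} (hc : 0 ≤ c)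
    (h : ∀ x ∈ A, osc φ x ≤ c) : oscOn φ A ≤ c := by
  refine Real.sSup_le ?_ hc
  rintro r ⟨z, hz, rfl⟩; exact h z hz

private lemma aux_osc_le_oscOn {φ : X → ℝ} (hb : ∀ x, φ x ∈ Set.Icc (0:ℝ) 1)
    {A : Set X} {x : X} (hx : x ∈ A) : osc φ x ≤ oscOn φ A := by
  refine le_csSup ⟨1, ?_⟩ ⟨x, hx, rfl⟩
  rintro r ⟨z, hz, rfl⟩; exact aux_osc_le_one hb z

end Aux
section Key

open Set

private lemma aux_summable_half : Summable (fun l : ℕ => (1/2 : ℝ) ^ (l + 1)) := by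
  have : Summable (fun l : ℕ => (1/2 : ℝ) ^ l) := summable_geometric_two
  simpa [pow_succ] using this.mul_right (1/2 : ℝ)

private lemma aux_tsum_half : ∑' l : ℕ, (1/2 : ℝ) ^ (l + 1) = 1 := by
  calc ∑' l : ℕ, (1/2 : ℝ) ^ (l + 1) = ∑' l : ℕ, (1/2 : ℝ) ^ l * (1/2) := by
        simp [pow_succ]
    _ = 2 * (1/2) := by rw [tsum_mul_right, tsum_geometric_two]
    _ = 1 := by norm_num

private lemma aux_key {f : X → Y} {φ : ℕ → X → ℝ} (hb : ∀ l x, φ l x ∈ Set.Icc (0:ℝ) 1)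
    {y : Y} (he : FEquicontinuousAt f φ y) :
    ∃ ψ : X → ℝ, (∀ x, ψ x ∈ Set.Icc (0:ℝ) 1) ∧ FContinuousAt f ψ y ∧
      (∀ x l, φ l x = 1 → 0 < ψ x) ∧ (∀ x, (∀ l, φ l x = 0) → ψ x = 0) ∧
      (∀ x, 0 < ψ x → ∃ l, φ l x ≠ 0) := by
  set ψ : X → ℝ := fun x => ∑' l, (1/2 : ℝ) ^ (l + 1) * φ l x with hψ
  have hterm_nonneg : ∀ x l, 0 ≤ (1/2 : ℝ) ^ (l + 1) * φ l x :=
    fun x l => mul_nonneg (by positivity) (hb l x).1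
  have hterm_le : ∀ x l, (1/2 : ℝ) ^ (l + 1) * φ l x ≤ (1/2 : ℝ) ^ (l + 1) :=
    fun x l => mul_le_of_le_one_right (by positivity) (hb l x).2
  have hs : ∀ x, Summable (fun l => (1/2 : ℝ) ^ (l + 1) * φ l x) := fun x =>
    Summable.of_nonneg_of_le (hterm_nonneg x) (hterm_le x) aux_summable_half
  have hψ_mem : ∀ x, ψ x ∈ Set.Icc (0:ℝ) 1 := by
    intro x
    constructor
    · exact tsum_nonneg (hterm_nonneg x)
    · calc ψ x ≤ ∑' l : ℕ, (1/2 : ℝ) ^ (l + 1) :=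
            Summable.tsum_le_tsum (hterm_le x) (hs x) aux_summable_half
        _ = 1 := aux_tsum_half
  refine ⟨ψ, hψ_mem, ?_, ?_, ?_, ?_⟩
  · -- FContinuousAt
    intro ε hε
    obtain ⟨N, hN⟩ := exists_pow_lt_of_lt_one (show (0:ℝ) < ε/3 by linarith)
      (by norm_num : (1/2 : ℝ) < 1)
    obtain ⟨O, hOo, hyO, hO⟩ := he (ε/3) (by linarith)
    refine ⟨O, hOo, hyO, ?_⟩
    have hb' : ∀ x, ψ x ∈ Set.Icc (0:ℝ) 1 := hψ_mem
    have hbound : oscOn ψ (f ⁻¹' O) ≤ ε/3 + (1/2) ^ N := by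
      refine aux_oscOn_le (by positivity) ?_
      intro x hx
      have hGl : ∀ l : ℕ, ∃ G : Set X, IsOpen G ∧ x ∈ G ∧
          ∀ z ∈ G, |φ l x - φ l z| < ε/3 := fun l =>
        aux_exists_nhds_of_osc_lt (hb l)
          (lt_of_le_of_lt (aux_osc_le_oscOn (hb l) hx) (hO l))
      choose G hGo hxG hGε using hGl
      refine aux_osc_le_of_nhds (by positivity) ⟨⋂ l ∈ Finset.range N, G l,
        isOpen_biInter_finset (fun l _ => hGo l), ?_, ?_⟩
      · exact Set.mem_biInter (fun l _ => hxG l)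
      · intro z hz
        have hzG : ∀ l < N, z ∈ G l := by
          intro l hl
          simp only [Set.mem_iInter] at hz
          exact hz l (Finset.mem_range.mpr hl)
        -- pointwise abs terms
        set c : ℕ → ℝ := fun l => (1/2 : ℝ) ^ (l + 1) * |φ l x - φ l z| with hc
        have hc_nonneg : ∀ l, 0 ≤ c l := fun l => mul_nonneg (by positivity) (abs_nonneg _)
        have hc_le : ∀ l, c l ≤ (1/2 : ℝ) ^ (l + 1) := fun l =>
          mul_le_of_le_one_right (by positivity) (aux_abs_sub_le_one (hb l x) (hb l z))
        have hcs : Summable c := Summable.of_nonneg_of_le hc_nonneg hc_le aux_summable_half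
        have hstep1 : |ψ x - ψ z| ≤ ∑' l, c l := by
          have hsub : ψ x - ψ z = ∑' l, ((1/2 : ℝ) ^ (l + 1) * φ l x
              - (1/2 : ℝ) ^ (l + 1) * φ l z) := (Summable.tsum_sub (hs x) (hs z)).symm
          have hd : ∀ l, ‖(1/2 : ℝ) ^ (l + 1) * φ l x - (1/2 : ℝ) ^ (l + 1) * φ l z‖ = c l := by
            intro l
            rw [Real.norm_eq_abs, ← mul_sub, abs_mul,
              abs_of_nonneg (by positivity : (0:ℝ) ≤ (1/2:ℝ)^(l+1))]
          have hsumabs : Summable (fun l => ‖(1/2 : ℝ) ^ (l + 1) * φ l x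
              - (1/2 : ℝ) ^ (l + 1) * φ l z‖) := hcs.congr fun l => (hd l).symm
          calc |ψ x - ψ z| = ‖∑' l, ((1/2 : ℝ) ^ (l + 1) * φ l x
                - (1/2 : ℝ) ^ (l + 1) * φ l z)‖ := by rw [hsub, Real.norm_eq_abs]
            _ ≤ ∑' l, ‖(1/2 : ℝ) ^ (l + 1) * φ l x - (1/2 : ℝ) ^ (l + 1) * φ l z‖ :=
                norm_tsum_le_tsum_norm hsumabs
            _ = ∑' l, c l := tsum_congr hd
        have hsplit : ∑' l, c l = (∑ l ∈ Finset.range N, c l) + ∑' l, c (l + N) :=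
          (Summable.sum_add_tsum_nat_add N hcs).symm
        have hhead : ∑ l ∈ Finset.range N, c l ≤ ε/3 := by
          calc ∑ l ∈ Finset.range N, c l
              ≤ ∑ l ∈ Finset.range N, (1/2 : ℝ) ^ (l + 1) * (ε/3) := by
                refine Finset.sum_le_sum fun l hl => ?_
                exact mul_le_mul_of_nonneg_left
                  (le_of_lt (hGε l z (hzG l (Finset.mem_range.mp hl)))) (by positivity)
            _ = (∑ l ∈ Finset.range N, (1/2 : ℝ) ^ (l + 1)) * (ε/3) := by
                rw [Finset.sum_mul]
            _ ≤ 1 * (ε/3) := by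
                refine mul_le_mul_of_nonneg_right ?_ (by linarith)
                calc (∑ l ∈ Finset.range N, (1/2 : ℝ) ^ (l + 1))
                    ≤ ∑' l : ℕ, (1/2 : ℝ) ^ (l + 1) :=
                      Summable.sum_le_tsum _ (fun l _ => by positivity) aux_summable_half
                  _ = 1 := aux_tsum_half
            _ = ε/3 := one_mul _
        have htail : ∑' l, c (l + N) ≤ (1/2 : ℝ) ^ N := by
          have hshift : Summable (fun l => c (l + N)) := (summable_nat_add_iff N).mpr hcs
          have hshift2 : Summable (fun l : ℕ => (1/2 : ℝ) ^ (l + N + 1)) := by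
            have := (summable_nat_add_iff N).mpr aux_summable_half
            exact this.congr fun l => by ring_nf
          calc ∑' l, c (l + N) ≤ ∑' l : ℕ, (1/2 : ℝ) ^ (l + N + 1) :=
                Summable.tsum_le_tsum (fun l => hc_le (l + N)) hshift hshift2
            _ = ∑' l : ℕ, (1/2 : ℝ) ^ (l + 1) * (1/2 : ℝ) ^ N := by
                congr 1; funext l; rw [← pow_add]; ring_nf
            _ = 1 * (1/2 : ℝ) ^ N := by rw [tsum_mul_right, aux_tsum_half]
            _ = (1/2 : ℝ) ^ N := one_mul _
        calc |ψ x - ψ z| ≤ ∑' l, c l := hstep1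
          _ = (∑ l ∈ Finset.range N, c l) + ∑' l, c (l + N) := hsplit
          _ ≤ ε/3 + (1/2) ^ N := add_le_add hhead htail
    calc oscOn ψ (f ⁻¹' O) ≤ ε/3 + (1/2) ^ N := hbound
      _ < ε/3 + ε/3 := by linarith
      _ < ε := by linarith
  · -- positivity from φ l x = 1
    intro x l hl
    have : (1/2 : ℝ) ^ (l + 1) * φ l x ≤ ψ x :=
      Summable.le_tsum (hs x) l (fun j _ => hterm_nonneg x j)
    rw [hl, mul_one] at this
    exact lt_of_lt_of_le (by positivity) this
  · intro x hx
    have hfun : (fun l => (1/2 : ℝ) ^ (l + 1) * φ l x) = fun _ => (0:ℝ) := by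
      funext l; rw [hx l, mul_zero]
    simp only [hψ]
    rw [hfun, tsum_zero]
  · intro x hx
    by_contra hcon
    push_neg at hcon
    have hfun : (fun l => (1/2 : ℝ) ^ (l + 1) * φ l x) = fun _ => (0:ℝ) := by
      funext l; rw [hcon l, mul_zero]
    have : ψ x = 0 := by
      simp only [hψ]
      rw [hfun, tsum_zero]
    linarith

end Key
private lemma aux_open_half {f : X → Y} (h : PerfectlyNormalMap f) :
    ∀ O : Set X, IsOpen O → FFunctionallyOpen f O := by
  intro O hOopen y
  obtain ⟨Oy, hOyo, hyOy, φ, hb, he, hUnion, hz⟩ := h O hOopen y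
  obtain ⟨ψ, hψb, hψc, hpos, hzero, hne⟩ := aux_key hb he
  refine ⟨Oy, hOyo, hyOy, ψ, hψb, hψc, ?_⟩
  ext x
  simp only [Set.mem_inter_iff, Set.mem_preimage]
  constructor
  · rintro ⟨hxO, hxOy⟩
    have hx : x ∈ ⋃ l, φ l ⁻¹' {1} ∩ f ⁻¹' Oy := hUnion ▸ (⟨hxO, hxOy⟩ : x ∈ O ∩ f ⁻¹' Oy)
    obtain ⟨l, hl, -⟩ := Set.mem_iUnion.mp hx
    exact ⟨⟨hpos x l hl, (hψb x).2⟩, hxOy⟩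
  · rintro ⟨⟨hψx, -⟩, hxOy⟩
    refine ⟨?_, hxOy⟩
    by_contra hxO
    have : ψ x = 0 := hzero x fun l => (hz l ⟨hxOy, hxO⟩).1
    linarith


/-- Proposition 5.9: for a perfectly normal mapping, every open submapping is
`f`-functionally open and every closed submapping is `f`-functionally closed. -/
theorem perfectlyNormalMap_functionally {X Y : Type*} [TopologicalSpace X] [TopologicalSpace Y]
    (f : X → Y) (hf : Continuous f) (h : PerfectlyNormalMap f) :
    (∀ O : Set X, IsOpen O → FFunctionallyOpen f O) ∧
      (∀ F : Set X, IsClosed F → FFunctionallyClosed f F) := by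
  refine ⟨aux_open_half h, ?_⟩
  intro F hF y
  obtain ⟨Oy, hOyo, hyOy, ψ, hψb, hψc, heq⟩ := aux_open_half h Fᶜ hF.isOpen_compl y
  refine ⟨Oy, hOyo, hyOy, ψ, hψb, hψc, ?_⟩
  ext x
  simp only [Set.mem_inter_iff, Set.mem_preimage, Set.mem_singleton_iff]
  have hiff : x ∈ f ⁻¹' Oy → (x ∈ Fᶜ ↔ ψ x ∈ Set.Ioc (0:ℝ) 1) := by
    intro hx
    constructor
    · intro hxc
      have : x ∈ ψ ⁻¹' Set.Ioc (0:ℝ) 1 ∩ f ⁻¹' Oy := heq ▸ (⟨hxc, hx⟩ : x ∈ Fᶜ ∩ f ⁻¹' Oy)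
      exact this.1
    · intro hψx
      have : x ∈ Fᶜ ∩ f ⁻¹' Oy := heq.symm ▸ (⟨hψx, hx⟩ : x ∈ ψ ⁻¹' Set.Ioc (0:ℝ) 1 ∩ f ⁻¹' Oy)
      exact this.1
  constructor
  · rintro ⟨hxF, hxOy⟩
    refine ⟨?_, hxOy⟩
    by_contra hψx
    have h1 := (hiff hxOy).mpr ⟨lt_of_le_of_ne (hψb x).1 (Ne.symm hψx), (hψb x).2⟩
    exact h1 hxF
  · rintro ⟨hψx, hxOy⟩
    refine ⟨?_, hxOy⟩
    by_contra hxF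
    have := (hiff hxOy).mp hxF
    rw [hψx] at this
    exact lt_irrefl 0 this.1
end

section
/- Every perfectly normal mapping f : X → Y is co-perfectly normal, i.e., f is normal and every open submapping f|_U : U → Y (U open in X) is of type F_σ. -/
/- Definitions from fiberwise general topology (Liseev, "Functional approach
to the normality of mappings"). -/

variable {X Y : Type*} [TopologicalSpace X] [TopologicalSpace Y]

section MyAux

variable {X' : Type*} [TopologicalSpace X']

lemma aux_bddAbove {φ : X' → ℝ} (hφ : ∀ x, φ x ∈ Set.Icc (0:ℝ) 1) (x : X') (T : Set X') :
    BddAbove ((fun z => |φ x - φ z|) '' T) := by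
  refine ⟨2, ?_⟩
  rintro r ⟨z, -, rfl⟩
  obtain ⟨h1, h2⟩ := hφ x
  obtain ⟨h3, h4⟩ := hφ z
  rw [abs_sub_le_iff]
  constructor <;> simp <;> linarith

lemma aux_bddBelow {φ : X' → ℝ} (hφ : ∀ x, φ x ∈ Set.Icc (0:ℝ) 1) (x : X') :
    BddBelow {r : ℝ | ∃ G : Set X', IsOpen G ∧ x ∈ G ∧
      r = sSup ((fun z => |φ x - φ z|) '' (G ∩ Set.univ))} := by
  refine ⟨0, ?_⟩
  rintro r ⟨G, hG, hxG, rfl⟩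
  have h0 : (0:ℝ) ∈ (fun z => |φ x - φ z|) '' (G ∩ Set.univ) :=
    ⟨x, ⟨hxG, trivial⟩, by simp⟩
  exact le_csSup (aux_bddAbove hφ x _) h0

lemma aux_osc_le_two {φ : X' → ℝ} (hφ : ∀ x, φ x ∈ Set.Icc (0:ℝ) 1) (x : X') :
    osc φ x ≤ 2 := by
  have hmem : sSup ((fun z => |φ x - φ z|) '' ((Set.univ : Set X') ∩ Set.univ)) ∈
      {r : ℝ | ∃ G : Set X', IsOpen G ∧ x ∈ G ∧
        r = sSup ((fun z => |φ x - φ z|) '' (G ∩ Set.univ))} :=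
    ⟨Set.univ, isOpen_univ, trivial, rfl⟩
  refine le_trans (csInf_le (aux_bddBelow hφ x) hmem) ?_
  refine Real.sSup_le ?_ (by norm_num)
  rintro r ⟨z, -, rfl⟩
  obtain ⟨h1, h2⟩ := hφ x
  obtain ⟨h3, h4⟩ := hφ z
  rw [abs_sub_le_iff]
  constructor <;> simp <;> linarith

lemma aux_osc_lt {φ : X' → ℝ} (hφ : ∀ x, φ x ∈ Set.Icc (0:ℝ) 1) {A : Set X'} {x : X'}
    (hx : x ∈ A) {ε : ℝ} (h : oscOn φ A < ε) : osc φ x < ε := by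
  unfold oscOn oscOnWithin at h
  have hmem : osc φ x ∈ oscWithin Set.univ φ '' A := ⟨x, hx, rfl⟩
  have hbdd : BddAbove (oscWithin Set.univ φ '' A) := by
    refine ⟨2, ?_⟩
    rintro r ⟨z, -, rfl⟩
    exact aux_osc_le_two hφ z
  exact lt_of_le_of_lt (le_csSup hbdd hmem) h

lemma aux_nbhd {φ : X' → ℝ} (hφ : ∀ x, φ x ∈ Set.Icc (0:ℝ) 1) {x : X'} {ε : ℝ}
    (h : osc φ x < ε) : ∃ G : Set X', IsOpen G ∧ x ∈ G ∧ ∀ z ∈ G, |φ x - φ z| < ε := by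
  unfold osc oscWithin at h
  have hne : {r : ℝ | ∃ G : Set X', IsOpen G ∧ x ∈ G ∧
      r = sSup ((fun z => |φ x - φ z|) '' (G ∩ Set.univ))}.Nonempty :=
    ⟨_, Set.univ, isOpen_univ, trivial, rfl⟩
  obtain ⟨r, ⟨G, hG, hxG, rfl⟩, hr⟩ := (csInf_lt_iff (aux_bddBelow hφ x) hne).mp h
  refine ⟨G, hG, hxG, fun z hz => ?_⟩
  have hmem : |φ x - φ z| ∈ (fun z => |φ x - φ z|) '' (G ∩ Set.univ) :=
    ⟨z, ⟨hz, trivial⟩, rfl⟩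
  exact lt_of_le_of_lt (le_csSup (aux_bddAbove hφ x _) hmem) hr

lemma aux_closure {φ : X' → ℝ} (hφ : ∀ x, φ x ∈ Set.Icc (0:ℝ) 1) {x : X'} {ε c : ℝ}
    (h : osc φ x < ε) {T : Set X'} (hxT : x ∈ closure T) (hT : ∀ z ∈ T, c ≤ φ z) :
    c - ε < φ x := by
  obtain ⟨G, hG, hxG, hGlt⟩ := aux_nbhd hφ h
  obtain ⟨z, hzG, hzT⟩ := mem_closure_iff.mp hxT G hG hxG
  have h1 := abs_sub_lt_iff.mp (hGlt z hzG)
  have h2 := hT z hzT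
  linarith [h1.1, h1.2]

end MyAux

/-- Proposition 5.13, second part: every perfectly normal mapping is
co-perfectly normal, i.e. normal with every open submapping of type `F_σ`. -/
theorem perfectlyNormalMap_coPerfectlyNormal {X Y : Type*} [TopologicalSpace X]
    [TopologicalSpace Y] (f : X → Y) (hf : Continuous f) (h : PerfectlyNormalMap f) :
    NormalMap f ∧ ∀ U : Set X, IsOpen U → FSigmaSubmap f U := by
  constructor
  · -- NormalMap
    intro O hO A B hA hB hAB y hyO
    obtain ⟨CA, hCA, rfl⟩ := hA
    obtain ⟨CB, hCB, rfl⟩ := hB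
    obtain ⟨O1, hO1, hyO1, φ, hφ01, hφeq, hφ1, hφ0⟩ := h CAᶜ hCA.isOpen_compl y
    obtain ⟨O2, hO2, hyO2, ψ, hψ01, hψeq, hψ1, hψ0⟩ := h CBᶜ hCB.isOpen_compl y
    obtain ⟨O3, hO3, hyO3, hosc1⟩ := hφeq (1/4) (by norm_num)
    obtain ⟨O4, hO4, hyO4, hosc2⟩ := hψeq (1/4) (by norm_num)
    refine ⟨O ∩ O1 ∩ O2 ∩ O3 ∩ O4,
      ((((hO.inter hO1).inter hO2).inter hO3).inter hO4),
      ⟨⟨⟨⟨hyO, hyO1⟩, hyO2⟩, hyO3⟩, hyO4⟩,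
      fun z hz => hz.1.1.1.1, ?_⟩
    set W : Set Y := O ∩ O1 ∩ O2 ∩ O3 ∩ O4 with hW
    set S : Set X := f ⁻¹' W with hSdef
    -- the two families of open sets
    set UU : ℕ → Set X := fun l => ⋃₀ {G : Set X | IsOpen G ∧ ∀ w ∈ G, 3/4 < ψ l w} with hUU
    set VV : ℕ → Set X := fun l => ⋃₀ {G : Set X | IsOpen G ∧ ∀ w ∈ G, 3/4 < φ l w} with hVV
    have hUUopen : ∀ l, IsOpen (UU l) := fun l => isOpen_sUnion fun G hG => hG.1
    have hVVopen : ∀ l, IsOpen (VV l) := fun l => isOpen_sUnion fun G hG => hG.1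
    have hUUgt : ∀ l, ∀ x ∈ UU l, 3/4 < ψ l x := by
      rintro l x ⟨G, hG, hxG⟩; exact hG.2 x hxG
    have hVVgt : ∀ l, ∀ x ∈ VV l, 3/4 < φ l x := by
      rintro l x ⟨G, hG, hxG⟩; exact hG.2 x hxG
    -- pointwise values
    have hAzero : ∀ x ∈ (CA ∩ f ⁻¹' O) ∩ S, ∀ m, φ m x = 0 := by
      rintro x ⟨⟨hxCA, -⟩, hxS⟩ m
      have hx1 : f x ∈ O1 := hxS.1.1.1.2
      have := (hφ0 m ⟨hx1, by simpa using hxCA⟩).1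
      simpa using this
    have hBzero : ∀ x ∈ (CB ∩ f ⁻¹' O) ∩ S, ∀ m, ψ m x = 0 := by
      rintro x ⟨⟨hxCB, -⟩, hxS⟩ m
      have hx2 : f x ∈ O2 := hxS.1.1.2
      have := (hψ0 m ⟨hx2, by simpa using hxCB⟩).1
      simpa using this
    -- covering facts
    have hAcov : ∀ x ∈ (CA ∩ f ⁻¹' O) ∩ S, ∃ l, x ∈ UU l := by
      rintro x ⟨⟨hxCA, hxO⟩, hxS⟩
      have hxCB : x ∉ CB := by
        intro hxCB
        have : x ∈ (CA ∩ f ⁻¹' O) ∩ (CB ∩ f ⁻¹' O) := ⟨⟨hxCA, hxO⟩, hxCB, hxO⟩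
        rw [hAB] at this
        exact this
      have hx2 : f x ∈ O2 := hxS.1.1.2
      have hmem : x ∈ (⋃ l, ψ l ⁻¹' {1} ∩ f ⁻¹' O2) := by
        rw [← hψ1]; exact ⟨hxCB, hx2⟩
      obtain ⟨l, hl1, -⟩ := Set.mem_iUnion.mp hmem
      have hψx : ψ l x = 1 := hl1
      have hoscx : osc (ψ l) x < 1/4 :=
        aux_osc_lt (hψ01 l) (show x ∈ f ⁻¹' O4 from hxS.2) (hosc2 l)
      obtain ⟨G, hG, hxG, hGlt⟩ := aux_nbhd (hψ01 l) hoscx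
      refine ⟨l, G, ⟨hG, fun w hw => ?_⟩, hxG⟩
      have := abs_sub_lt_iff.mp (hGlt w hw)
      rw [hψx] at this
      linarith [this.1]
    have hBcov : ∀ x ∈ (CB ∩ f ⁻¹' O) ∩ S, ∃ l, x ∈ VV l := by
      rintro x ⟨⟨hxCB, hxO⟩, hxS⟩
      have hxCA : x ∉ CA := by
        intro hxCA
        have : x ∈ (CA ∩ f ⁻¹' O) ∩ (CB ∩ f ⁻¹' O) := ⟨⟨hxCA, hxO⟩, hxCB, hxO⟩
        rw [hAB] at this
        exact this
      have hx1 : f x ∈ O1 := hxS.1.1.1.2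
      have hmem : x ∈ (⋃ l, φ l ⁻¹' {1} ∩ f ⁻¹' O1) := by
        rw [← hφ1]; exact ⟨hxCA, hx1⟩
      obtain ⟨l, hl1, -⟩ := Set.mem_iUnion.mp hmem
      have hφx : φ l x = 1 := hl1
      have hoscx : osc (φ l) x < 1/4 :=
        aux_osc_lt (hφ01 l) (show x ∈ f ⁻¹' O3 from hxS.1.2) (hosc1 l)
      obtain ⟨G, hG, hxG, hGlt⟩ := aux_nbhd (hφ01 l) hoscx
      refine ⟨l, G, ⟨hG, fun w hw => ?_⟩, hxG⟩
      have := abs_sub_lt_iff.mp (hGlt w hw)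
      rw [hφx] at this
      linarith [this.1]
    -- non-membership in closures
    have hAnotin : ∀ x ∈ (CA ∩ f ⁻¹' O) ∩ S, ∀ m, x ∉ closure (VV m) := by
      intro x hx m hcl
      have h0 : φ m x = 0 := hAzero x hx m
      have hoscx : osc (φ m) x < 1/4 :=
        aux_osc_lt (hφ01 m) (show x ∈ f ⁻¹' O3 from hx.2.1.2) (hosc1 m)
      have := aux_closure (hφ01 m) hoscx hcl (fun z hz => le_of_lt (hVVgt m z hz))
      rw [h0] at this
      norm_num at this
    have hBnotin : ∀ x ∈ (CB ∩ f ⁻¹' O) ∩ S, ∀ m, x ∉ closure (UU m) := by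
      intro x hx m hcl
      have h0 : ψ m x = 0 := hBzero x hx m
      have hoscx : osc (ψ m) x < 1/4 :=
        aux_osc_lt (hψ01 m) (show x ∈ f ⁻¹' O4 from hx.2.2) (hosc2 m)
      have := aux_closure (hψ01 m) hoscx hcl (fun z hz => le_of_lt (hUUgt m z hz))
      rw [h0] at this
      norm_num at this
    -- the separating open sets
    set U' : Set X := ⋃ l, UU l ∩ (⋃ m ∈ Finset.range (l+1), closure (VV m))ᶜ with hU'
    set V' : Set X := ⋃ l, VV l ∩ (⋃ m ∈ Finset.range (l+1), closure (UU m))ᶜ with hV'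
    have hU'open : IsOpen U' := isOpen_iUnion fun l =>
      (hUUopen l).inter (isOpen_compl_iff.mpr
        (Set.Finite.isClosed_biUnion (Finset.range (l+1)).finite_toSet
          fun m _ => isClosed_closure))
    have hV'open : IsOpen V' := isOpen_iUnion fun l =>
      (hVVopen l).inter (isOpen_compl_iff.mpr
        (Set.Finite.isClosed_biUnion (Finset.range (l+1)).finite_toSet
          fun m _ => isClosed_closure))
    refine ⟨U' ∩ S, V' ∩ S, ⟨U', hU'open, rfl⟩, ⟨V', hV'open, rfl⟩, ?_, ?_, ?_⟩
    · rintro x hx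
      obtain ⟨l, hl⟩ := hAcov x hx
      refine ⟨Set.mem_iUnion.mpr ⟨l, hl, ?_⟩, hx.2⟩
      intro hmem
      simp only [Set.mem_iUnion] at hmem
      obtain ⟨m, -, hm⟩ := hmem
      exact hAnotin x hx m hm
    · rintro x hx
      obtain ⟨l, hl⟩ := hBcov x hx
      refine ⟨Set.mem_iUnion.mpr ⟨l, hl, ?_⟩, hx.2⟩
      intro hmem
      simp only [Set.mem_iUnion] at hmem
      obtain ⟨m, -, hm⟩ := hmem
      exact hBnotin x hx m hm
    · rw [Set.eq_empty_iff_forall_notMem]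
      rintro x ⟨⟨hx1, -⟩, ⟨hx2, -⟩⟩
      obtain ⟨l, hUl, hl⟩ := Set.mem_iUnion.mp hx1
      obtain ⟨k, hVk, hk⟩ := Set.mem_iUnion.mp hx2
      rcases le_total l k with hlk | hkl
      · apply hk
        simp only [Set.mem_iUnion]
        exact ⟨l, Finset.mem_range.mpr (by omega), subset_closure hUl⟩
      · apply hl
        simp only [Set.mem_iUnion]
        exact ⟨k, Finset.mem_range.mpr (by omega), subset_closure hVk⟩
  · -- FSigma part
    intro U hU y
    obtain ⟨Oy, hOy, hyOy, φ, hφ01, hφeq, hU1, hU0⟩ := h U hU y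
    obtain ⟨O', hO', hyO', hosc⟩ := hφeq (1/2) (by norm_num)
    refine ⟨Oy ∩ O', hOy.inter hO', ⟨hyOy, hyO'⟩, ?_⟩
    set S : Set X := f ⁻¹' (Oy ∩ O') with hS
    refine ⟨fun l => closure (φ l ⁻¹' {1} ∩ S) ∩ S,
      fun l => ⟨closure (φ l ⁻¹' {1} ∩ S), isClosed_closure, rfl⟩, ?_⟩
    ext x
    simp only [Set.mem_inter_iff, Set.mem_iUnion]
    constructor
    · rintro ⟨hxU, hxS⟩
      have hmem : x ∈ (⋃ l, φ l ⁻¹' {1} ∩ f ⁻¹' Oy) := by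
        rw [← hU1]; exact ⟨hxU, hxS.1⟩
      obtain ⟨l, hl1, -⟩ := Set.mem_iUnion.mp hmem
      exact ⟨l, subset_closure ⟨hl1, hxS⟩, hxS⟩
    · rintro ⟨l, hcl, hxS⟩
      refine ⟨?_, hxS⟩
      by_contra hxU
      have h0 : φ l x = 0 := by
        have := (hU0 l ⟨hxS.1, hxU⟩).1
        simpa using this
      have hoscx : osc (φ l) x < 1/2 :=
        aux_osc_lt (hφ01 l) (show x ∈ f ⁻¹' O' from hxS.2) (hosc l)
      have := aux_closure (hφ01 l) hoscx hcl
        (fun z hz => le_of_eq (show φ l z = 1 from hz.1).symm)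
      rw [h0] at this
      norm_num at this
end
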